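/- arXiv:2308.10766 — 6 statements merged into one kernel-verified Lean document; each statement's English description precedes it below -/
import Mathlib

section
/- Let n ≥ 1 and let Λ be an invertible (2n+2)×(2n+2) real matrix. Then ΛᵀηΛ = η if and only if the last row of Λ is (0, …, 0, ε) with ε ∈ {1, −1}; equivalently, if and only if there exist an invertible (2n+1)×(2n+1) real matrix Ω, a vector u ∈ ℝ^{2n+1} and ε ∈ {1, −1} such that Λ = Λ°(Ω, u)·Δ(ε). -/
open Matrix

noncomputable section

/-- `η`: the `(2n+2)×(2n+2)` matrix whose only nonzero entry is a `1`
in the bottom-right corner. -/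
def etaM (n : ℕ) : Matrix (Fin (2*n+2)) (Fin (2*n+2)) ℝ :=
  Matrix.of fun i j => if i.val = 2*n+1 ∧ j.val = 2*n+1 then 1 else 0

/-- `ζ°`: block-diagonal with `n` copies of `[[0,1],[-1,0]]`. -/
def zetaC (n : ℕ) : Matrix (Fin (2*n)) (Fin (2*n)) ℝ :=
  Matrix.of fun i j =>
    if j.val = i.val + 1 ∧ i.val % 2 = 0 then 1
    else if i.val = j.val + 1 ∧ j.val % 2 = 0 then -1 else 0

/-- `ζ = diag(ζ°, [[0,1],[-1,0]])`: block-diagonal with `n+1` copies of `[[0,1],[-1,0]]`. -/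
def zetaBig (n : ℕ) : Matrix (Fin (2*n+2)) (Fin (2*n+2)) ℝ :=
  Matrix.of fun i j =>
    if j.val = i.val + 1 ∧ i.val % 2 = 0 then 1
    else if i.val = j.val + 1 ∧ j.val % 2 = 0 then -1 else 0

/-- `Λ°(Ω,u)`: the block matrix `[[Ω, u],[0, 1]]` (blocks of sizes `2n+1` and `1`). -/
def LamO (n : ℕ) (Ω : Matrix (Fin (2*n+1)) (Fin (2*n+1)) ℝ) (u : Fin (2*n+1) → ℝ) :
    Matrix (Fin (2*n+2)) (Fin (2*n+2)) ℝ :=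
  Matrix.of fun i j =>
    if hi : i.val < 2*n+1 then
      if hj : j.val < 2*n+1 then Ω ⟨i.val, hi⟩ ⟨j.val, hj⟩ else u ⟨i.val, hi⟩
    else
      if j.val < 2*n+1 then 0 else 1

/-- `Δ(ε) = diag(1,…,1,ε)`. -/
def DeltaM (n : ℕ) (ε : ℝ) : Matrix (Fin (2*n+2)) (Fin (2*n+2)) ℝ :=
  Matrix.diagonal fun i => if i.val < 2*n+1 then 1 else ε

/-- `Γ°(Σ,w,r)`: the block matrix (blocks of sizes `2n`, `1`, `1`)
`[[Σ, 0, w],[wᵀζ°Σ, 1, 2r],[0, 0, 1]]`. -/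
def GamO (n : ℕ) (S : Matrix (Fin (2*n)) (Fin (2*n)) ℝ) (w : Fin (2*n) → ℝ) (r : ℝ) :
    Matrix (Fin (2*n+2)) (Fin (2*n+2)) ℝ :=
  Matrix.of fun i j =>
    if hi : i.val < 2*n then
      if hj : j.val < 2*n then S ⟨i.val, hi⟩ ⟨j.val, hj⟩
      else if j.val = 2*n then 0 else w ⟨i.val, hi⟩
    else if i.val = 2*n then
      if hj : j.val < 2*n then Matrix.vecMul (Matrix.vecMul w (zetaC n)) S ⟨j.val, hj⟩
      else if j.val = 2*n then 1 else 2*r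
    else
      if j.val = 2*n+1 then 1 else 0

/-- `Υ(w,r) = Γ°(1_{2n}, w, r)`: Weyl–Heisenberg element in unpolarized coordinates. -/
def Ups (n : ℕ) (w : Fin (2*n) → ℝ) (r : ℝ) : Matrix (Fin (2*n+2)) (Fin (2*n+2)) ℝ :=
  GamO n 1 w r

/-- The Lie algebra generator `W_a = [[0,0,e_a],[e_aᵀζ°,0,0],[0,0,0]]`. -/
def Wmat (n : ℕ) (a : Fin (2*n)) : Matrix (Fin (2*n+2)) (Fin (2*n+2)) ℝ :=
  Matrix.of fun i j =>
    if i.val < 2*n ∧ j.val = 2*n+1 then (if i.val = a.val then 1 else 0)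
    else if _hi : i.val = 2*n then
      (if hj : j.val < 2*n then zetaC n a ⟨j.val, hj⟩ else 0)
    else 0

/-- The central generator `R`: only nonzero entry a `2` in position `(2n+1, 2n+2)` (1-indexed). -/
def Rmat (n : ℕ) : Matrix (Fin (2*n+2)) (Fin (2*n+2)) ℝ :=
  Matrix.of fun i j => if i.val = 2*n ∧ j.val = 2*n+1 then 2 else 0

/-- Time reversal `T = diag(1_{2n}, -1, -1)`. -/
def Tmat (n : ℕ) : Matrix (Fin (2*n+2)) (Fin (2*n+2)) ℝ :=
  Matrix.diagonal fun i => if i.val < 2*n then 1 else -1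

/-- `Σ(R)`: the `2n×2n` matrix with `Σ(R)_{2i-1,2j-1} = Σ(R)_{2i,2j} = R_{ij}`
(1-indexed) and all other entries zero. -/
def SigmaR (n : ℕ) (R : Matrix (Fin n) (Fin n) ℝ) : Matrix (Fin (2*n)) (Fin (2*n)) ℝ :=
  Matrix.of fun a b =>
    if a.val % 2 = b.val % 2 then
      R ⟨a.val / 2, by have := a.isLt; omega⟩ ⟨b.val / 2, by have := b.isLt; omega⟩
    else 0

/-- `ι(v) ∈ ℝ^{2n}` with `ι(v)_{2i-1} = v_i` and `ι(v)_{2i} = 0` (1-indexed). -/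
def iotaV (n : ℕ) (v : Fin n → ℝ) : Fin (2*n) → ℝ :=
  fun a => if a.val % 2 = 0 then v ⟨a.val / 2, by have := a.isLt; omega⟩ else 0

/-- The position-momentum part `y` of a point `z = (y, ε, t)` of extended phase space. -/
def yPart (n : ℕ) (z : Fin (2*n+2) → ℝ) : Fin (2*n) → ℝ :=
  fun a => z ⟨a.val, by have := a.isLt; omega⟩

/-- The time coordinate `t` of a point `z = (y, ε, t)` of extended phase space. -/
def tCoord (n : ℕ) (z : Fin (2*n+2) → ℝ) : ℝ := z ⟨2*n+1, by omega⟩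

/-- The map `ρ(y, ε, t) = (y + φ(t), ε + H(y,t), t + c)` on extended phase space. -/
def rhoMap (n : ℕ) (φ : ℝ → Fin (2*n) → ℝ) (H : (Fin (2*n) → ℝ) → ℝ → ℝ) (c : ℝ)
    (z : Fin (2*n+2) → ℝ) : Fin (2*n+2) → ℝ :=
  fun i =>
    if hi : i.val < 2*n then z i + φ (tCoord n z) ⟨i.val, hi⟩
    else if i.val = 2*n then z i + H (yPart n z) (tCoord n z)
    else z i + c

/-- The Jacobian matrix (in the standard coordinates) of a map `f : ℝ^N → ℝ^N` at `z`. -/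
def jacM (N : ℕ) (f : (Fin N → ℝ) → (Fin N → ℝ)) (z : Fin N → ℝ) :
    Matrix (Fin N) (Fin N) ℝ :=
  Matrix.of fun i j => fderiv ℝ f z (Pi.single j 1) i


/-! Since `η = e eᵀ` for the last basis vector `e`, `Λᵀ η Λ = r rᵀ` where `r` is the last row of
`Λ`, and `r rᵀ = e eᵀ` exactly when `r = ±e`. A matrix with last row `ε e` is block upper
triangular: it equals `Λ°(Ω, u) Δ(ε)` with `Ω` its top-left block, and the Laplace expansion along
the last row gives `det Λ = ε det Ω`, so `Ω` is invertible when `Λ` is. -/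

namespace Matrix

variable {ι R : Type*} [DecidableEq ι]

theorem transpose_mul_single_mul [Fintype ι] [CommSemiring R] (A : Matrix ι ι R) (l : ι) :
    Aᵀ * single l l 1 * A = vecMulVec (A l) (A l) := by
  ext i j
  simp [mul_apply, single_apply, vecMulVec_apply, ite_and, Finset.sum_ite_eq]

theorem vecMulVec_self_eq_single_iff [Ring R] [NoZeroDivisors R] (v : ι → R) (l : ι) :
    vecMulVec v v = single l l 1 ↔ ∃ ε : R, (ε = 1 ∨ ε = -1) ∧ v = Pi.single l ε := by
  constructor
  · intro h
    have hll : v l * v l = 1 := by simpa [vecMulVec_apply] using congr_fun₂ h l l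
    refine ⟨v l, mul_self_eq_one_iff.mp hll, funext fun j => ?_⟩
    rcases eq_or_ne j l with rfl | hj
    · simp
    · have hjl : v j * v l = 0 := by
        simpa only [vecMulVec_apply, single_apply, hj.symm, false_and, if_false]
          using congr_fun₂ h j l
      rw [Pi.single_eq_of_ne hj]
      calc v j = v j * (v l * v l) := by rw [hll, mul_one]
        _ = 0 := by rw [← mul_assoc, hjl, zero_mul]
  · rintro ⟨ε, hε, rfl⟩
    have hεε : ε * ε = 1 := mul_self_eq_one_iff.mpr hε
    ext i j
    simp only [vecMulVec_apply, single_apply, Pi.single_apply]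
    by_cases hi : i = l <;> by_cases hj : j = l <;> simp [hi, hj, hεε, Ne.symm]

theorem transpose_mul_single_mul_eq_self_iff [Fintype ι] [CommRing R] [NoZeroDivisors R]
    (A : Matrix ι ι R) (l : ι) :
    Aᵀ * single l l 1 * A = single l l 1 ↔ ∃ ε : R, (ε = 1 ∨ ε = -1) ∧ A l = Pi.single l ε := by
  rw [transpose_mul_single_mul, vecMulVec_self_eq_single_iff]

theorem det_eq_mul_det_submatrix_castSucc [CommRing R] {m : ℕ}
    (A : Matrix (Fin (m + 1)) (Fin (m + 1)) R) {c : R}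
    (h : A (Fin.last m) = Pi.single (Fin.last m) c) :
    A.det = c * (A.submatrix Fin.castSucc Fin.castSucc).det := by
  rw [det_succ_row A (Fin.last m), Fintype.sum_eq_single (Fin.last m) fun j hj => by
    simp [h, Pi.single_eq_of_ne hj]]
  simp [h, Fin.succAbove_last]

theorem isUnit_submatrix_castSucc [CommRing R] {m : ℕ}
    {A : Matrix (Fin (m + 1)) (Fin (m + 1)) R} (hA : IsUnit A) {c : R}
    (h : A (Fin.last m) = Pi.single (Fin.last m) c) :
    IsUnit (A.submatrix Fin.castSucc Fin.castSucc) := by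
  rw [isUnit_iff_isUnit_det, det_eq_mul_det_submatrix_castSucc A h] at hA
  exact (isUnit_iff_isUnit_det _).mpr (isUnit_of_mul_isUnit_right hA)

end Matrix

theorem etaM_eq_single (n : ℕ) : etaM n = single (Fin.last (2*n+1)) (Fin.last (2*n+1)) 1 := by
  ext i j
  simp [etaM, single_apply, Fin.ext_iff, eq_comm]

theorem forall_eq_ite_iff_eq_single (n : ℕ) (v : Fin (2*n+2) → ℝ) (ε : ℝ) :
    (∀ j : Fin (2*n+2), v j = if j.val = 2*n+1 then ε else 0) ↔
      v = Pi.single (Fin.last (2*n+1)) ε := by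
  simp [funext_iff, Pi.single_apply, Fin.ext_iff]

theorem LamO_mul_DeltaM_apply_last (n : ℕ) (Ω : Matrix (Fin (2*n+1)) (Fin (2*n+1)) ℝ)
    (u : Fin (2*n+1) → ℝ) (ε : ℝ) :
    (LamO n Ω u * DeltaM n ε) (Fin.last (2*n+1)) = Pi.single (Fin.last (2*n+1)) ε := by
  ext j
  induction j using Fin.lastCases <;>
    simp [LamO, DeltaM, Fin.is_le, Pi.single_eq_of_ne, Fin.castSucc_ne_last]

theorem eq_LamO_mul_DeltaM (n : ℕ) (Λ : Matrix (Fin (2*n+2)) (Fin (2*n+2)) ℝ) {ε : ℝ}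
    (hε : ε * ε = 1) (h : Λ (Fin.last (2*n+1)) = Pi.single (Fin.last (2*n+1)) ε) :
    Λ = LamO n (Λ.submatrix Fin.castSucc Fin.castSucc)
      (fun i => ε * Λ i.castSucc (Fin.last (2*n+1))) * DeltaM n ε := by
  ext i j
  induction i using Fin.lastCases <;> induction j using Fin.lastCases <;>
    simp [LamO, DeltaM, h, Fin.is_le, mul_comm _ ε, ← mul_assoc, hε]

theorem statement0 (n : ℕ) (Λ : Matrix (Fin (2*n+2)) (Fin (2*n+2)) ℝ) (hΛ : IsUnit Λ) :
    (Λᵀ * etaM n * Λ = etaM n ↔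
      ∃ ε : ℝ, (ε = 1 ∨ ε = -1) ∧
        ∀ j : Fin (2*n+2), Λ ⟨2*n+1, by omega⟩ j = if j.val = 2*n+1 then ε else 0) ∧
    (Λᵀ * etaM n * Λ = etaM n ↔
      ∃ (Ω : Matrix (Fin (2*n+1)) (Fin (2*n+1)) ℝ) (u : Fin (2*n+1) → ℝ) (ε : ℝ),
        IsUnit Ω ∧ (ε = 1 ∨ ε = -1) ∧ Λ = LamO n Ω u * DeltaM n ε) := by
  have hlast : Λᵀ * etaM n * Λ = etaM n ↔
      ∃ ε : ℝ, (ε = 1 ∨ ε = -1) ∧ Λ (Fin.last (2*n+1)) = Pi.single (Fin.last (2*n+1)) ε := by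
    rw [etaM_eq_single, transpose_mul_single_mul_eq_self_iff]
  refine ⟨by simp_rw [hlast, forall_eq_ite_iff_eq_single]; rfl, hlast.trans ⟨?_, ?_⟩⟩
  · rintro ⟨ε, hε, hrow⟩
    have hεε : ε * ε = 1 := mul_self_eq_one_iff.mpr hε
    exact ⟨_, _, ε, isUnit_submatrix_castSucc hΛ hrow, hε, eq_LamO_mul_DeltaM n Λ hεε hrow⟩
  · rintro ⟨Ω, u, ε, -, hε, rfl⟩
    exact ⟨ε, hε, LamO_mul_DeltaM_apply_last n Ω u ε⟩

end
end

section
/- Let n ≥ 1 and let Γ be a (2n+2)×(2n+2) real matrix satisfying ΓᵀζΓ = ζ whose last row is (0, …, 0, 1). Then there exist Σ ∈ Sp(2n), w ∈ ℝ^{2n} and r ∈ ℝ such that Γ = Γ°(Σ, w, r). -/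
open Matrix

noncomputable section

/-!
Since `ζ² = -1`, the relation `Γᵀ ζ Γ = ζ` makes `Γ` invertible and gives `Γ ζ Γᵀ = ζ` too.
The form `xᵀ ζ y` splits as `x'ᵀ ζ° y' + x₂ₙ y₂ₙ₊₁ - x₂ₙ₊₁ y₂ₙ`, where `x'` collects the
first `2n` coordinates. Pairing the known last row with `Γ ζ Γᵀ = ζ` shows that column `2n` of
`Γ` is `e₂ₙ`. Pairing two of the first `2n` columns in `Γᵀ ζ Γ = ζ` shows that the top-left
block `Σ` is symplectic, and pairing one of them with the last column gives row `2n` as `wᵀ ζ° Σ`.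
-/

theorem Matrix.mul_mul_transpose_eq_of_transpose_mul_mul_eq {m R : Type*} [Fintype m]
    [DecidableEq m] [CommRing R] {J Γ : Matrix m m R} (hJ : J * J = -1)
    (h : Γᵀ * J * Γ = J) : Γ * J * Γᵀ = J := by
  have hinv : Γ * (-J * Γᵀ * J) = 1 := mul_eq_one_comm.mp <| by
    rw [Matrix.mul_assoc, Matrix.mul_assoc, ← Matrix.mul_assoc Γᵀ, h, Matrix.neg_mul, hJ, neg_neg]
  calc Γ * J * Γᵀ = Γ * (-J * Γᵀ * J) * J := by
        simp only [Matrix.mul_assoc, Matrix.neg_mul, Matrix.mul_neg, hJ, neg_neg, Matrix.mul_one]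
    _ = J := by rw [hinv, Matrix.one_mul]

lemma zetaBig_mul_self (n : ℕ) : zetaBig n * zetaBig n = -1 := by
  ext i j
  -- the only nonzero entry of row `i` sits in the column `p` paired with `i`
  obtain ⟨p, hp⟩ : ∃ p : Fin (2*n+2), p.val = if i.val % 2 = 0 then i.val + 1 else i.val - 1 :=
    ⟨⟨if i.val % 2 = 0 then i.val + 1 else i.val - 1, by have := i.isLt; split <;> omega⟩, rfl⟩
  rw [mul_apply, Fintype.sum_eq_single p fun k hk => by
    have : k.val ≠ p.val := Fin.val_ne_of_ne hk
    simp only [zetaBig, of_apply]; split_ifs at hp ⊢ <;> first | omega | simp]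
  simp only [zetaBig, of_apply, Matrix.neg_apply, one_apply, Fin.ext_iff]
  split_ifs at hp ⊢ <;> first | omega | norm_num

lemma zetaC_transpose (n : ℕ) : (zetaC n)ᵀ = -zetaC n := by
  ext i j
  simp only [zetaC, transpose_apply, Matrix.neg_apply, of_apply]
  split_ifs <;> first | omega | norm_num

lemma zetaBig_castAdd_castAdd (n : ℕ) (a b : Fin (2*n)) :
    zetaBig n (Fin.castAdd 2 a) (Fin.castAdd 2 b) = zetaC n a b := rfl

lemma zetaBig_castAdd_natAdd (n : ℕ) (a : Fin (2*n)) (k : Fin 2) :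
    zetaBig n (Fin.castAdd 2 a) (Fin.natAdd (2*n) k) = 0 := by
  have := a.isLt
  simp only [zetaBig, of_apply, Fin.val_castAdd, Fin.val_natAdd]
  split_ifs <;> first | omega | rfl

lemma zetaBig_natAdd_castAdd (n : ℕ) (a : Fin (2*n)) (k : Fin 2) :
    zetaBig n (Fin.natAdd (2*n) k) (Fin.castAdd 2 a) = 0 := by
  have := a.isLt
  simp only [zetaBig, of_apply, Fin.val_castAdd, Fin.val_natAdd]
  split_ifs <;> first | omega | rfl

lemma zetaBig_apply_last (n : ℕ) (i : Fin (2*n+2)) :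
    zetaBig n i ⟨2*n+1, by omega⟩ = if i.val = 2*n then 1 else 0 := by
  simp only [zetaBig, of_apply]
  split_ifs <;> first | omega | rfl

lemma dotProduct_zetaBig_mulVec (n : ℕ) (x y : Fin (2*n+2) → ℝ) :
    x ⬝ᵥ zetaBig n *ᵥ y = (x ∘ Fin.castAdd 2) ⬝ᵥ zetaC n *ᵥ (y ∘ Fin.castAdd 2)
      + x ⟨2*n, by omega⟩ * y ⟨2*n+1, by omega⟩ - x ⟨2*n+1, by omega⟩ * y ⟨2*n, by omega⟩ := by
  simp only [dot_mulVec_eq_sum_sum, Fin.sum_univ_add, Fin.sum_univ_two,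
    zetaBig_castAdd_castAdd, zetaBig_castAdd_natAdd, zetaBig_natAdd_castAdd, mul_zero, zero_mul,
    Finset.sum_const_zero, add_zero, zero_add, Function.comp_apply]
  norm_num [zetaBig, Fin.natAdd]
  ring

lemma eq_GamO (n : ℕ) (Γ : Matrix (Fin (2*n+2)) (Fin (2*n+2)) ℝ)
    (hlast : ∀ j : Fin (2*n+2), Γ ⟨2*n+1, by omega⟩ j = if j.val = 2*n+1 then 1 else 0)
    (hcol : ∀ i : Fin (2*n+2), Γ i ⟨2*n, by omega⟩ = if i.val = 2*n then 1 else 0)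
    (hrow : ∀ b : Fin (2*n), Γ ⟨2*n, by omega⟩ (Fin.castAdd 2 b) =
      ((fun a => Γ (Fin.castAdd 2 a) ⟨2*n+1, by omega⟩) ᵥ* zetaC n ᵥ*
        Γ.submatrix (Fin.castAdd 2) (Fin.castAdd 2)) b) :
    Γ = GamO n (Γ.submatrix (Fin.castAdd 2) (Fin.castAdd 2))
      (fun a => Γ (Fin.castAdd 2 a) ⟨2*n+1, by omega⟩)
      (Γ ⟨2*n, by omega⟩ ⟨2*n+1, by omega⟩ / 2) := by
  have hM : Fin.natAdd (2*n) (0 : Fin 2) = ⟨2*n, by omega⟩ := rfl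
  have hL : Fin.natAdd (2*n) (1 : Fin 2) = ⟨2*n+1, by omega⟩ := rfl
  ext i j
  induction i using Fin.addCases with
  | left a =>
    induction j using Fin.addCases with
    | left b => simp [GamO]
    | right k =>
      fin_cases k
      · simpa [GamO, hM, a.isLt.ne] using hcol (Fin.castAdd 2 a)
      · simp [GamO, hL]
  | right k =>
    fin_cases k
    · induction j using Fin.addCases with
      | left b => simpa [GamO, hM] using hrow b
      | right k =>
        fin_cases k
        · simpa [GamO, hM] using hcol ⟨2*n, by omega⟩
        · simp [GamO, hM, hL, mul_div_cancel₀]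
    · induction j using Fin.addCases with
      | left b => simpa [GamO, hL] using hlast (Fin.castAdd 2 b)
      | right k =>
        fin_cases k
        · simpa [GamO, hM, hL] using hlast ⟨2*n, by omega⟩
        · simpa [GamO, hL] using hlast ⟨2*n+1, by omega⟩

section

variable {n : ℕ} {Γ : Matrix (Fin (2*n+2)) (Fin (2*n+2)) ℝ}

lemma col_penultimate_eq_of_last_row (hΓ : Γᵀ * zetaBig n * Γ = zetaBig n)
    (hlast : ∀ j : Fin (2*n+2), Γ ⟨2*n+1, by omega⟩ j = if j.val = 2*n+1 then 1 else 0)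
    (i : Fin (2*n+2)) : Γ i ⟨2*n, by omega⟩ = if i.val = 2*n then 1 else 0 := by
  have h := congrFun₂ (mul_mul_transpose_eq_of_transpose_mul_mul_eq (zetaBig_mul_self n) hΓ)
    i ⟨2*n+1, by omega⟩
  rw [mul_mul_apply, transpose_transpose] at h
  have hlast_top : Γ ⟨2*n+1, by omega⟩ ∘ Fin.castAdd 2 = 0 :=
    funext fun b => by simpa [show b.val ≠ 2*n+1 by omega] using hlast (Fin.castAdd 2 b)
  simpa [dotProduct_zetaBig_mulVec, hlast_top, hlast, zetaBig_apply_last] using h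

lemma submatrix_castAdd_symplectic (hΓ : Γᵀ * zetaBig n * Γ = zetaBig n)
    (hlast_top : ∀ b : Fin (2*n), Γ ⟨2*n+1, by omega⟩ (Fin.castAdd 2 b) = 0) :
    (Γ.submatrix (Fin.castAdd 2) (Fin.castAdd 2))ᵀ * zetaC n *
      Γ.submatrix (Fin.castAdd 2) (Fin.castAdd 2) = zetaC n := by
  ext a b
  have h := dotProduct_zetaBig_mulVec n (Γᵀ (Fin.castAdd 2 a)) (Γᵀ (Fin.castAdd 2 b))
  rw [← mul_mul_apply, hΓ] at h
  simp only [transpose_apply, hlast_top, mul_zero, zero_mul, add_zero, sub_zero,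
    zetaBig_castAdd_castAdd] at h
  rw [mul_mul_apply]
  exact h.symm

lemma row_penultimate_castAdd_eq (hΓ : Γᵀ * zetaBig n * Γ = zetaBig n)
    (hlast_top : ∀ b : Fin (2*n), Γ ⟨2*n+1, by omega⟩ (Fin.castAdd 2 b) = 0)
    (hcorner : Γ ⟨2*n+1, by omega⟩ ⟨2*n+1, by omega⟩ = 1) (b : Fin (2*n)) :
    Γ ⟨2*n, by omega⟩ (Fin.castAdd 2 b) =
      ((fun a => Γ (Fin.castAdd 2 a) ⟨2*n+1, by omega⟩) ᵥ* zetaC n ᵥ*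
        Γ.submatrix (Fin.castAdd 2) (Fin.castAdd 2)) b := by
  have h := dotProduct_zetaBig_mulVec n (Γᵀ (Fin.castAdd 2 b)) (Γᵀ ⟨2*n+1, by omega⟩)
  rw [← mul_mul_apply, hΓ, zetaBig_apply_last, if_neg (by simp [b.isLt.ne])] at h
  simp only [transpose_apply, hlast_top, hcorner, mul_one, zero_mul, sub_zero] at h
  rw [vecMul, ← dotProduct_mulVec, ← dotProduct_transpose_mulVec, zetaC_transpose, neg_mulVec,
    dotProduct_neg]
  exact eq_neg_of_add_eq_zero_right h.symm

end

theorem statement4 (n : ℕ) (Γ : Matrix (Fin (2*n+2)) (Fin (2*n+2)) ℝ)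
    (hΓ : Γᵀ * zetaBig n * Γ = zetaBig n)
    (hlast : ∀ j : Fin (2*n+2), Γ ⟨2*n+1, by omega⟩ j = if j.val = 2*n+1 then 1 else 0) :
    ∃ (S : Matrix (Fin (2*n)) (Fin (2*n)) ℝ) (w : Fin (2*n) → ℝ) (r : ℝ),
      Sᵀ * zetaC n * S = zetaC n ∧ Γ = GamO n S w r := by
  have hlast_top (b : Fin (2*n)) : Γ ⟨2*n+1, by omega⟩ (Fin.castAdd 2 b) = 0 := by
    simpa [show b.val ≠ 2*n+1 by omega] using hlast (Fin.castAdd 2 b)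
  have hcorner : Γ ⟨2*n+1, by omega⟩ ⟨2*n+1, by omega⟩ = 1 := by simp [hlast]
  exact ⟨_, _, _, submatrix_castAdd_symplectic hΓ hlast_top,
    eq_GamO n Γ hlast (col_penultimate_eq_of_last_row hΓ hlast)
      (row_penultimate_castAdd_eq hΓ hlast_top hcorner)⟩

end
end

section
/- Let n ≥ 1 and let T = diag(1_{2n}, −1, −1) be the (2n+2)×(2n+2) time-reversal matrix. Then T satisfies TᵀζT = ζ and TᵀηT = η, T² = 1, and for every Σ ∈ Sp(2n), w ∈ ℝ^{2n}, r ∈ ℝ one has T·Γ°(Σ, w, r)·T⁻¹ = Γ°(Σ, −w, r). Consequently the set {Γ°(Σ, w, r)·Tᵏ : Σ ∈ Sp(2n), w ∈ ℝ^{2n}, r ∈ ℝ, k ∈ {0,1}} is a subgroup of GL(2n+2, ℝ) in which the Jacobi group {Γ°(Σ, w, r)} is a normal subgroup of index 2. -/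
open Matrix

noncomputable section

/-!
Block multiplication of the 3×3 block matrices `Γ°` gives
`Γ°(Σ,w,r) Γ°(Σ',w',r') = Γ°(ΣΣ', Σw' + w, r + r' + ½ wᵀζ°Σw')`, where `Σᵀζ°Σ = ζ°` is exactly
what makes the bottom-left block `(Σw' + w)ᵀζ°ΣΣ'` come out right. Since `ζ°² = -1`, a
symplectic `Σ` has the symplectic inverse `-ζ°Σᵀζ°`, so the Jacobi group `J` is closed under
products and inverses. `T` is diagonal with `T² = 1`, and conjugation by it negates exactly the
blocks `w` and `wᵀζ°Σ` of `Γ°`; hence `T` normalises `J`, and `J ∪ JT` is a group in which `J` is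
normal. Finally `T ∉ J` because its bottom-right entry is `-1`, not `1`.
-/

section AdjoinInvolution

variable {M : Type*} [Monoid M]

def adjoinInvolution (J : Set M) (T : M) : Set M :=
  {g | ∃ A ∈ J, g = A ∨ g = A * T}

variable {J : Set M} {T : M}

lemma subset_adjoinInvolution : J ⊆ adjoinInvolution J T :=
  fun A hA => ⟨A, hA, Or.inl rfl⟩

lemma mem_adjoinInvolution_self (h1 : 1 ∈ J) : T ∈ adjoinInvolution J T :=
  ⟨1, h1, Or.inr (one_mul T).symm⟩

lemma mem_or_mul_mem_of_mem_adjoinInvolution (hT : T * T = 1) {g : M}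
    (hg : g ∈ adjoinInvolution J T) : g ∈ J ∨ g * T ∈ J := by
  obtain ⟨A, hA, rfl | rfl⟩ := hg
  · exact Or.inl hA
  · rw [mul_assoc, hT, mul_one]
    exact Or.inr hA

end AdjoinInvolution

section MatrixGroup

variable {m R : Type*} [Fintype m] [DecidableEq m] [CommRing R]

structure IsMatrixGroup (G : Set (Matrix m m R)) : Prop where
  one_mem : 1 ∈ G
  mul_mem : ∀ A ∈ G, ∀ B ∈ G, A * B ∈ G
  inv_mem : ∀ A ∈ G, A⁻¹ ∈ G
  isUnit : ∀ A ∈ G, IsUnit A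

lemma IsMatrixGroup.of_exists_mul_eq_one {G : Set (Matrix m m R)} (one_mem : 1 ∈ G)
    (mul_mem : ∀ A ∈ G, ∀ B ∈ G, A * B ∈ G) (exists_inv : ∀ A ∈ G, ∃ B ∈ G, A * B = 1) :
    IsMatrixGroup G where
  one_mem := one_mem
  mul_mem := mul_mem
  inv_mem A hA := by
    obtain ⟨B, hB, hAB⟩ := exists_inv A hA
    rwa [inv_eq_right_inv hAB]
  isUnit A hA := by
    obtain ⟨B, -, hAB⟩ := exists_inv A hA
    exact (isUnit_iff_isUnit_det A).2 (isUnit_det_of_right_inverse hAB)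

variable {J : Set (Matrix m m R)} {T : Matrix m m R}

lemma IsMatrixGroup.mul_inv_eq_one (hJ : IsMatrixGroup J) {A : Matrix m m R} (hA : A ∈ J) :
    A * A⁻¹ = 1 :=
  mul_nonsing_inv A ((isUnit_iff_isUnit_det A).1 (hJ.isUnit A hA))

lemma isMatrixGroup_adjoinInvolution (hJ : IsMatrixGroup J) (hT : T * T = 1)
    (hTJ : ∀ A ∈ J, T * A * T ∈ J) : IsMatrixGroup (adjoinInvolution J T) := by
  refine .of_exists_mul_eq_one (subset_adjoinInvolution hJ.one_mem) ?_ ?_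
  · rintro g ⟨A, hA, hg | hg⟩ h ⟨B, hB, hh | hh⟩ <;> subst g h
    · exact ⟨A * B, hJ.mul_mem A hA B hB, Or.inl rfl⟩
    · exact ⟨A * B, hJ.mul_mem A hA B hB, Or.inr (mul_assoc A B T).symm⟩
    · refine ⟨A * (T * B * T), hJ.mul_mem A hA _ (hTJ B hB), Or.inr ?_⟩
      simp only [mul_assoc, hT, mul_one]
    · refine ⟨A * (T * B * T), hJ.mul_mem A hA _ (hTJ B hB), Or.inl ?_⟩
      simp only [mul_assoc]
  · rintro g ⟨A, hA, hg | hg⟩ <;> subst g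
    · exact ⟨A⁻¹, subset_adjoinInvolution (hJ.inv_mem A hA), hJ.mul_inv_eq_one hA⟩
    · refine ⟨T * A⁻¹, ⟨T * A⁻¹ * T, hTJ _ (hJ.inv_mem A hA), Or.inr ?_⟩, ?_⟩
      · rw [mul_assoc _ T, hT, mul_one]
      · rw [mul_assoc, ← mul_assoc T, hT, one_mul, hJ.mul_inv_eq_one hA]

lemma IsMatrixGroup.conj_mem_of_mem_adjoinInvolution (hJ : IsMatrixGroup J) (hT : T * T = 1)
    (hTJ : ∀ A ∈ J, T * A * T ∈ J) {g h : Matrix m m R} (hg : g ∈ adjoinInvolution J T)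
    (hh : h ∈ J) : g * h * g⁻¹ ∈ J := by
  obtain ⟨A, hA, rfl | rfl⟩ := hg
  · exact hJ.mul_mem _ (hJ.mul_mem _ hA _ hh) _ (hJ.inv_mem _ hA)
  · have hconj : A * T * h * (A * T)⁻¹ = A * (T * h * T) * A⁻¹ := by
      rw [Matrix.mul_inv_rev, inv_eq_right_inv hT]
      simp only [mul_assoc]
    rw [hconj]
    exact hJ.mul_mem _ (hJ.mul_mem _ hA _ (hTJ h hh)) _ (hJ.inv_mem _ hA)

end MatrixGroup

section Symplectic

variable {ι R : Type*} [Fintype ι] [CommRing R] {Z S S' B : Matrix ι ι R}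

lemma symplectic_mul (hS : Sᵀ * Z * S = Z) (hS' : S'ᵀ * Z * S' = Z) :
    (S * S')ᵀ * Z * (S * S') = Z :=
  calc (S * S')ᵀ * Z * (S * S') = S'ᵀ * (Sᵀ * Z * S) * S' := by
        simp only [transpose_mul, Matrix.mul_assoc]
    _ = Z := by rw [hS, hS']

lemma symplectic_left_inverse [DecidableEq ι] (hZ : Z * Z = -1) (hS : Sᵀ * Z * S = Z) :
    (-Z * Sᵀ * Z) * S = 1 :=
  calc (-Z * Sᵀ * Z) * S = -Z * (Sᵀ * Z * S) := by simp only [Matrix.mul_assoc]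
    _ = 1 := by rw [hS, neg_mul, hZ, neg_neg]

lemma symplectic_of_mul_eq_one [DecidableEq ι] (hS : Sᵀ * Z * S = Z) (hSB : S * B = 1) :
    Bᵀ * Z * B = Z :=
  calc Bᵀ * Z * B = Bᵀ * (Sᵀ * Z * S) * B := by rw [hS]
    _ = (S * B)ᵀ * Z * (S * B) := by simp only [transpose_mul, Matrix.mul_assoc]
    _ = Z := by simp [hSB]

lemma vecMul_vecMul_of_symplectic (hS : Sᵀ * Z * S = Z) (v : ι → R) :
    (S *ᵥ v) ᵥ* Z ᵥ* S = v ᵥ* Z := by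
  rw [← vecMul_transpose, vecMul_vecMul, vecMul_vecMul, ← Matrix.mul_assoc, hS]

end Symplectic

section JacobiGroup

variable {n : ℕ}

lemma zetaC_mul_self (n : ℕ) : zetaC n * zetaC n = -1 := by
  ext i j
  have hi := i.isLt
  -- the only nonzero entry of row `i` of `ζ°` sits in the column of the partner of `i`
  let p : Fin (2*n) := ⟨if i.val % 2 = 0 then i.val + 1 else i.val - 1, by split_ifs <;> omega⟩
  rw [mul_apply, Finset.sum_eq_single p]
  · simp only [zetaC, p, of_apply, Matrix.neg_apply, Matrix.one_apply, Fin.ext_iff]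
    split_ifs <;> first | omega | norm_num
  · intro k _ hk
    have hk' : k.val ≠ p.val := fun h => hk (Fin.ext h)
    simp only [zetaC, p, of_apply] at hk' ⊢
    split_ifs at hk' ⊢ <;> first | omega | norm_num
  · simp

-- The blocks of `Γ°(Σ,w,r)` along `Fin (2n+2) = Fin (2n) ⊕ Fin 2`.
section Blocks

variable (S : Matrix (Fin (2*n)) (Fin (2*n)) ℝ) (w : Fin (2*n) → ℝ) (r : ℝ)

@[simp] lemma GamO_castAdd_castAdd (i j : Fin (2*n)) :
    GamO n S w r (Fin.castAdd 2 i) (Fin.castAdd 2 j) = S i j := by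
  simp [GamO]

@[simp] lemma GamO_castAdd_natAdd (i : Fin (2*n)) (l : Fin 2) :
    GamO n S w r (Fin.castAdd 2 i) (Fin.natAdd (2*n) l) = ![0, w i] l := by
  fin_cases l <;> simp [GamO]

@[simp] lemma GamO_natAdd_castAdd (l : Fin 2) (j : Fin (2*n)) :
    GamO n S w r (Fin.natAdd (2*n) l) (Fin.castAdd 2 j) = ![w ᵥ* zetaC n ᵥ* S, 0] l j := by
  fin_cases l <;> simp [GamO]; omega

@[simp] lemma GamO_natAdd_natAdd (l l' : Fin 2) :
    GamO n S w r (Fin.natAdd (2*n) l) (Fin.natAdd (2*n) l') = !![1, 2*r; 0, 1] l l' := by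
  fin_cases l <;> fin_cases l' <;> simp [GamO]

end Blocks

lemma GamO_mul {S S' : Matrix (Fin (2*n)) (Fin (2*n)) ℝ} (hS : Sᵀ * zetaC n * S = zetaC n)
    (w w' : Fin (2*n) → ℝ) (r r' : ℝ) :
    GamO n S w r * GamO n S' w' r' =
      GamO n (S * S') (S *ᵥ w' + w) (r + r' + (w ᵥ* zetaC n ᵥ* S ⬝ᵥ w') / 2) := by
  ext i j
  induction i using Fin.addCases with
  | left i => induction j using Fin.addCases with
    | left j => simp [mul_apply, Fin.sum_univ_add]
    | right l => fin_cases l <;> simp [mul_apply, Fin.sum_univ_add, mulVec, dotProduct]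
  | right k => induction j using Fin.addCases with
    | left j =>
      fin_cases k
      · simp [mul_apply, Fin.sum_univ_add, add_vecMul, ← vecMul_vecMul _ S S',
          vecMul_vecMul_of_symplectic hS]
        rw [← vecMul_vecMul w (zetaC n * S) S', vecMul_apply_eq_sum (w ᵥ* (zetaC n * S)), add_comm]
      · simp [mul_apply, Fin.sum_univ_add]
    | right l =>
      fin_cases k <;> fin_cases l <;> simp [mul_apply, Fin.sum_univ_add, dotProduct]
      ring

lemma GamO_one_zero_zero (n : ℕ) : GamO n 1 0 0 = 1 := by
  ext i j
  simp only [GamO, of_apply, zero_vecMul, Matrix.one_apply, Pi.zero_apply, Fin.ext_iff]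
  split_ifs <;> first | ring1 | omega

lemma exists_GamO_mul_eq_one {S : Matrix (Fin (2*n)) (Fin (2*n)) ℝ}
    (hS : Sᵀ * zetaC n * S = zetaC n) (w : Fin (2*n) → ℝ) (r : ℝ) :
    ∃ S' w' r', S'ᵀ * zetaC n * S' = zetaC n ∧ GamO n S w r * GamO n S' w' r' = 1 := by
  set S' := -zetaC n * Sᵀ * zetaC n
  have hSS' : S * S' = 1 := mul_eq_one_comm.mp (symplectic_left_inverse (zetaC_mul_self n) hS)
  set w' := -(S' *ᵥ w)
  refine ⟨S', w', -(r + (w ᵥ* zetaC n ᵥ* S ⬝ᵥ w') / 2), symplectic_of_mul_eq_one hS hSS', ?_⟩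
  rw [GamO_mul hS, hSS', mulVec_neg, mulVec_mulVec, hSS', one_mulVec, neg_add_cancel,
    ← GamO_one_zero_zero n]
  congr 1
  ring

def jacobiGroup (n : ℕ) : Set (Matrix (Fin (2*n+2)) (Fin (2*n+2)) ℝ) :=
  {M | ∃ S w r, Sᵀ * zetaC n * S = zetaC n ∧ M = GamO n S w r}

lemma isMatrixGroup_jacobiGroup (n : ℕ) : IsMatrixGroup (jacobiGroup n) := by
  refine .of_exists_mul_eq_one ⟨1, 0, 0, by simp, (GamO_one_zero_zero n).symm⟩ ?_ ?_
  · rintro _ ⟨S, w, r, hS, rfl⟩ _ ⟨S', w', r', hS', rfl⟩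
    exact ⟨_, _, _, symplectic_mul hS hS', GamO_mul hS w w' r r'⟩
  · rintro _ ⟨S, w, r, hS, rfl⟩
    obtain ⟨S', w', r', hS', h⟩ := exists_GamO_mul_eq_one hS w r
    exact ⟨_, ⟨S', w', r', hS', rfl⟩, h⟩

end JacobiGroup

section TimeReversal

variable {n : ℕ}

lemma Tmat_mul_self (n : ℕ) : Tmat n * Tmat n = 1 := by
  rw [Tmat, diagonal_mul_diagonal, ← diagonal_one]
  congr 1
  ext i
  split_ifs <;> norm_num

lemma transpose_Tmat_mul_zetaBig_mul_Tmat (n : ℕ) :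
    (Tmat n)ᵀ * zetaBig n * Tmat n = zetaBig n := by
  ext i j
  rw [Tmat, diagonal_transpose, mul_diagonal, diagonal_mul]
  simp only [zetaBig, of_apply]
  split_ifs <;> first | ring1 | omega

lemma transpose_Tmat_mul_etaM_mul_Tmat (n : ℕ) : (Tmat n)ᵀ * etaM n * Tmat n = etaM n := by
  ext i j
  rw [Tmat, diagonal_transpose, mul_diagonal, diagonal_mul]
  simp only [etaM, of_apply]
  split_ifs <;> first | ring1 | omega

lemma Tmat_mul_GamO_mul_Tmat (S : Matrix (Fin (2*n)) (Fin (2*n)) ℝ) (w : Fin (2*n) → ℝ) (r : ℝ) :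
    Tmat n * GamO n S w r * Tmat n = GamO n S (-w) r := by
  ext i j
  rw [Tmat, mul_diagonal, diagonal_mul]
  simp only [GamO, of_apply, neg_vecMul, Pi.neg_apply]
  split_ifs <;> first | ring1 | omega

lemma Tmat_mul_mul_Tmat_mem_jacobiGroup {A : Matrix (Fin (2*n+2)) (Fin (2*n+2)) ℝ}
    (hA : A ∈ jacobiGroup n) : Tmat n * A * Tmat n ∈ jacobiGroup n := by
  obtain ⟨S, w, r, hS, rfl⟩ := hA
  exact ⟨S, -w, r, hS, Tmat_mul_GamO_mul_Tmat S w r⟩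

lemma Tmat_not_mem_jacobiGroup (n : ℕ) : Tmat n ∉ jacobiGroup n := by
  rintro ⟨S, w, r, -, h⟩
  have h_last := congr_fun₂ h (Fin.natAdd (2*n) 1) (Fin.natAdd (2*n) 1)
  norm_num [Tmat] at h_last

lemma setOf_GamO_or_GamO_mul_Tmat (n : ℕ) :
    {M | ∃ S w r, Sᵀ * zetaC n * S = zetaC n ∧ (M = GamO n S w r ∨ M = GamO n S w r * Tmat n)}
      = adjoinInvolution (jacobiGroup n) (Tmat n) := by
  ext M
  simp [adjoinInvolution, jacobiGroup]

end TimeReversal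

theorem statement12_general (n : ℕ)
    (G2 Jset : Set (Matrix (Fin (2*n+2)) (Fin (2*n+2)) ℝ))
    (hG2 : G2 = {M | ∃ S w r, Sᵀ * zetaC n * S = zetaC n ∧
      (M = GamO n S w r ∨ M = GamO n S w r * Tmat n)})
    (hJ : Jset = {M | ∃ S w r, Sᵀ * zetaC n * S = zetaC n ∧ M = GamO n S w r}) :
    (Tmat n)ᵀ * zetaBig n * Tmat n = zetaBig n ∧
    (Tmat n)ᵀ * etaM n * Tmat n = etaM n ∧
    Tmat n * Tmat n = 1 ∧
    (∀ (S : Matrix (Fin (2*n)) (Fin (2*n)) ℝ) (w : Fin (2*n) → ℝ) (r : ℝ),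
      Sᵀ * zetaC n * S = zetaC n →
      Tmat n * GamO n S w r * (Tmat n)⁻¹ = GamO n S (-w) r) ∧
    (1 ∈ G2 ∧ (∀ A ∈ G2, ∀ B ∈ G2, A * B ∈ G2) ∧ (∀ A ∈ G2, A⁻¹ ∈ G2) ∧
      (∀ A ∈ G2, IsUnit A)) ∧
    (Jset ⊆ G2 ∧ (∀ g ∈ G2, ∀ h ∈ Jset, g * h * g⁻¹ ∈ Jset)) ∧
    (∀ g ∈ G2, g ∈ Jset ∨ g * Tmat n ∈ Jset) ∧
    Tmat n ∈ G2 ∧ Tmat n ∉ Jset := by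
  rw [setOf_GamO_or_GamO_mul_Tmat] at hG2
  change Jset = jacobiGroup n at hJ
  subst hG2 hJ
  have hJgrp := isMatrixGroup_jacobiGroup n
  have hT := Tmat_mul_self n
  have hTJ : ∀ A ∈ jacobiGroup n, Tmat n * A * Tmat n ∈ jacobiGroup n :=
    fun _ => Tmat_mul_mul_Tmat_mem_jacobiGroup
  have hG := isMatrixGroup_adjoinInvolution hJgrp hT hTJ
  refine ⟨transpose_Tmat_mul_zetaBig_mul_Tmat n, transpose_Tmat_mul_etaM_mul_Tmat n, hT,
    fun S w r _ => ?_, ⟨hG.one_mem, hG.mul_mem, hG.inv_mem, hG.isUnit⟩,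
    ⟨subset_adjoinInvolution, fun _ hg _ hh => hJgrp.conj_mem_of_mem_adjoinInvolution hT hTJ hg hh⟩,
    fun _ => mem_or_mul_mem_of_mem_adjoinInvolution hT,
    mem_adjoinInvolution_self hJgrp.one_mem, Tmat_not_mem_jacobiGroup n⟩
  rw [inv_eq_right_inv hT, Tmat_mul_GamO_mul_Tmat]

theorem statement12 (n : ℕ) (hn : 1 ≤ n)
    (G2 Jset : Set (Matrix (Fin (2*n+2)) (Fin (2*n+2)) ℝ))
    (hG2 : G2 = {M | ∃ S w r, Sᵀ * zetaC n * S = zetaC n ∧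
      (M = GamO n S w r ∨ M = GamO n S w r * Tmat n)})
    (hJ : Jset = {M | ∃ S w r, Sᵀ * zetaC n * S = zetaC n ∧ M = GamO n S w r}) :
    (Tmat n)ᵀ * zetaBig n * Tmat n = zetaBig n ∧
    (Tmat n)ᵀ * etaM n * Tmat n = etaM n ∧
    Tmat n * Tmat n = 1 ∧
    (∀ (S : Matrix (Fin (2*n)) (Fin (2*n)) ℝ) (w : Fin (2*n) → ℝ) (r : ℝ),
      Sᵀ * zetaC n * S = zetaC n →
      Tmat n * GamO n S w r * (Tmat n)⁻¹ = GamO n S (-w) r) ∧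
    (1 ∈ G2 ∧ (∀ A ∈ G2, ∀ B ∈ G2, A * B ∈ G2) ∧ (∀ A ∈ G2, A⁻¹ ∈ G2) ∧
      (∀ A ∈ G2, IsUnit A)) ∧
    (Jset ⊆ G2 ∧ (∀ g ∈ G2, ∀ h ∈ Jset, g * h * g⁻¹ ∈ Jset)) ∧
    (∀ g ∈ G2, g ∈ Jset ∨ g * Tmat n ∈ Jset) ∧
    Tmat n ∈ G2 ∧ Tmat n ∉ Jset :=
  statement12_general n G2 Jset hG2 hJ
end
end

section
/- Let n ≥ 1. For v ∈ ℝⁿ let ι(v) ∈ ℝ^{2n} be the vector with components ι(v)_{2i−1} = v_i and ι(v)_{2i} = 0 for 1 ≤ i ≤ n, and for R ∈ SO(n) let Σ(R) be the 2n×2n matrix with Σ(R)_{2i−1,2j−1} = Σ(R)_{2i,2j} = R_{ij} and all other entries zero. Then for all v, v' ∈ ℝⁿ and R, R' ∈ SO(n) one has Γ°(Σ(R'), ι(v'), 0)·Γ°(Σ(R), ι(v), 0) = Γ°(Σ(R'R), ι(v' + R'v), 0); hence the map (v, R) ↦ Γ°(Σ(R), ι(v), 0) is an injective group homomorphism from the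 Euclidean group E(n) = ℝⁿ ⋊ SO(n) (with product (v', R')·(v, R) = (v' + R'v, R'R)) into the Jacobi group {Γ°(Σ, w, r) : Σ ∈ Sp(2n), w ∈ ℝ^{2n}, r ∈ ℝ}. -/
open Matrix

noncomputable section

/-!
Index `2i + k` of `ℝ^{2n}` is paired with `(i, k) ∈ Fin n × Fin 2`. Then `Σ(R) = R ⊗ 1₂`,
`ζ° = 1ₙ ⊗ J` and `ι(v) = v ⊗ e₁`, so `Σ` is multiplicative, `Σ(R)` is symplectic for orthogonal
`R`, and `Σ(R) ι(v) = ι(R v)`. Since `e₁ᵀ J e₁ = 0`, the vectors `ι(v)` span a Lagrangian subspace,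
which kills the central term `½ w'ᵀ ζ° Σ' w` of the Jacobi group law
`Γ°(Σ', w', r') Γ°(Σ, w, r) = Γ°(Σ'Σ, w' + Σ'w, r' + r + ½ w'ᵀ ζ° Σ' w)`.
Injectivity is read off the blocks of `Γ°`.
-/

open Kronecker

def finPairEquiv (n : ℕ) : Fin n × Fin 2 ≃ Fin (2 * n) :=
  finProdFinEquiv.trans (finCongr (Nat.mul_comm n 2))

@[simp]
lemma finPairEquiv_symm_apply {n : ℕ} (a : Fin (2 * n)) :
    (finPairEquiv n).symm a = (⟨a / 2, by omega⟩, ⟨a % 2, by omega⟩) := rfl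

lemma sigmaR_eq_kronecker (n : ℕ) (R : Matrix (Fin n) (Fin n) ℝ) :
    SigmaR n R =
      reindex (finPairEquiv n) (finPairEquiv n) (R ⊗ₖ (1 : Matrix (Fin 2) (Fin 2) ℝ)) := by
  ext a b
  simp [SigmaR, one_apply, Fin.ext_iff]

lemma zetaC_eq_kronecker (n : ℕ) :
    zetaC n = reindex (finPairEquiv n) (finPairEquiv n)
      ((1 : Matrix (Fin n) (Fin n) ℝ) ⊗ₖ !![0, 1; -1, 0]) := by
  ext a b
  simp only [zetaC, of_apply, reindex_apply, submatrix_apply, finPairEquiv_symm_apply,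
    kroneckerMap_apply, one_apply, Fin.ext_iff]
  rcases Nat.mod_two_eq_zero_or_one a with ha | ha <;>
    rcases Nat.mod_two_eq_zero_or_one b with hb | hb <;> simp [ha, hb] <;>
    split_ifs <;> (try norm_num) <;> omega

lemma iotaV_eq_vec (n : ℕ) (v : Fin n → ℝ) :
    iotaV n v = vec (of ![v, 0]) ∘ (finPairEquiv n).symm := by
  ext a
  rcases Nat.mod_two_eq_zero_or_one a with ha | ha <;> simp [iotaV, ha, flip]

lemma sigmaR_mul (n : ℕ) (R R' : Matrix (Fin n) (Fin n) ℝ) :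
    SigmaR n R' * SigmaR n R = SigmaR n (R' * R) := by
  simp only [sigmaR_eq_kronecker, reindex_apply, submatrix_mul_equiv, ← mul_kronecker_mul,
    Matrix.mul_one]

lemma sigmaR_transpose_mul_zetaC_mul_sigmaR (n : ℕ) {R : Matrix (Fin n) (Fin n) ℝ}
    (hR : Rᵀ * R = 1) : (SigmaR n R)ᵀ * zetaC n * SigmaR n R = zetaC n := by
  simp only [sigmaR_eq_kronecker, zetaC_eq_kronecker, reindex_apply, transpose_submatrix,
    submatrix_mul_equiv, ← kroneckerMap_transpose, ← mul_kronecker_mul, transpose_one,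
    Matrix.mul_one, Matrix.one_mul, hR]

lemma reindex_finPairEquiv_mulVec_iotaV (n : ℕ) (M : Matrix (Fin n × Fin 2) (Fin n × Fin 2) ℝ)
    (v : Fin n → ℝ) :
    reindex (finPairEquiv n) (finPairEquiv n) M *ᵥ iotaV n v =
      (M *ᵥ vec (of ![v, 0])) ∘ (finPairEquiv n).symm := by
  rw [reindex_apply, submatrix_mulVec_equiv, iotaV_eq_vec, Equiv.symm_symm, Function.comp_assoc,
    Equiv.symm_comp_self, Function.comp_id]

lemma sigmaR_mulVec_iotaV (n : ℕ) (R : Matrix (Fin n) (Fin n) ℝ) (v : Fin n → ℝ) :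
    SigmaR n R *ᵥ iotaV n v = iotaV n (R *ᵥ v) := by
  have hrows : of ![v, 0] * Rᵀ = of ![R *ᵥ v, 0] := by
    ext k i
    fin_cases k <;> simp [mul_apply, mulVec, dotProduct, mul_comm]
  rw [sigmaR_eq_kronecker, reindex_finPairEquiv_mulVec_iotaV, kronecker_mulVec_vec, Matrix.one_mul,
    hrows, iotaV_eq_vec]

lemma iotaV_dotProduct_zetaC_mulVec_iotaV (n : ℕ) (u v : Fin n → ℝ) :
    iotaV n u ⬝ᵥ zetaC n *ᵥ iotaV n v = 0 := by
  rw [zetaC_eq_kronecker, reindex_finPairEquiv_mulVec_iotaV, kronecker_mulVec_vec, transpose_one,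
    Matrix.mul_one, iotaV_eq_vec, comp_equiv_dotProduct_comp_equiv]
  simp [dotProduct, Fintype.sum_prod_type]

lemma iotaV_add (n : ℕ) (u v : Fin n → ℝ) : iotaV n (u + v) = iotaV n u + iotaV n v := by
  ext a
  simp only [iotaV, Pi.add_apply]
  split_ifs <;> simp

lemma sigmaR_injective (n : ℕ) : Function.Injective (SigmaR n) := by
  intro R R' h
  simp only [sigmaR_eq_kronecker, (reindex _ _).injective.eq_iff] at h
  ext i j
  simpa using congr_fun₂ h (i, 0) (j, 0)

lemma iotaV_injective (n : ℕ) : Function.Injective (iotaV n) := by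
  intro u v h
  ext i
  simpa [iotaV_eq_vec, flip] using congr_fun h (finPairEquiv n (i, 0))

lemma gamO_eq_fromBlocks (n : ℕ) (S : Matrix (Fin (2 * n)) (Fin (2 * n)) ℝ) (w : Fin (2 * n) → ℝ)
    (r : ℝ) :
    GamO n S w r = (fromBlocks S (of ![0, w])ᵀ (of ![w ᵥ* zetaC n ᵥ* S, 0])
      !![1, 2 * r; 0, 1]).submatrix finSumFinEquiv.symm finSumFinEquiv.symm := by
  ext i j
  refine Fin.addCases (fun k => ?_) (fun k => ?_) i <;>
    refine Fin.addCases (fun l => ?_) (fun l => ?_) j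
  · simp [GamO]
  · fin_cases l <;> simp [GamO]
  · fin_cases k <;> simp [GamO]; omega
  · fin_cases k <;> fin_cases l <;> simp [GamO]

lemma gamO_mul_gamO (n : ℕ) {S S' : Matrix (Fin (2 * n)) (Fin (2 * n)) ℝ}
    (hS' : S'ᵀ * zetaC n * S' = zetaC n) (w w' : Fin (2 * n) → ℝ) (r r' : ℝ) :
    GamO n S' w' r' * GamO n S w r =
      GamO n (S' * S) (w' + S' *ᵥ w) (r' + r + w' ⬝ᵥ zetaC n *ᵥ S' *ᵥ w / 2) := by
  have hsymp : (S' *ᵥ w) ᵥ* zetaC n ᵥ* S' = w ᵥ* zetaC n := by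
    rw [← vecMul_transpose, vecMul_vecMul, vecMul_vecMul, ← Matrix.mul_assoc, hS']
  simp only [gamO_eq_fromBlocks, submatrix_mul_equiv, fromBlocks_multiply, dotProduct_mulVec]
  congr 2
  · ext i j
    simp [mul_apply]
  · ext i j
    fin_cases j <;> simp [mul_apply, mulVec, dotProduct, add_comm]
  · ext i j
    fin_cases i
    · simp only [add_vecMul, hsymp, ← vecMul_vecMul]
      simp [mul_apply, vecMul, dotProduct]
    · simp
  · generalize w' ᵥ* zetaC n ᵥ* S' = u
    ext i j
    fin_cases i <;> fin_cases j <;> simp [vecMul, dotProduct]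
    ring

lemma gamO_inj (n : ℕ) {S S' : Matrix (Fin (2 * n)) (Fin (2 * n)) ℝ} {w w' : Fin (2 * n) → ℝ}
    {r r' : ℝ} : GamO n S w r = GamO n S' w' r' ↔ S = S' ∧ w = w' ∧ r = r' := by
  simp only [gamO_eq_fromBlocks, ← reindex_apply, (reindex _ _).injective.eq_iff, fromBlocks_inj,
    transpose_inj, EmbeddingLike.apply_eq_iff_eq]
  constructor
  · rintro ⟨rfl, hw, -, hr⟩
    exact ⟨rfl, congr_fun hw 1, by simpa using congr_fun₂ hr 0 1⟩
  · rintro ⟨rfl, rfl, rfl⟩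
    simp

theorem statement15_general (n : ℕ) :
    (∀ (R R' : Matrix (Fin n) (Fin n) ℝ) (v v' : Fin n → ℝ),
      Rᵀ * R = 1 → R.det = 1 → R'ᵀ * R' = 1 → R'.det = 1 →
      GamO n (SigmaR n R') (iotaV n v') 0 * GamO n (SigmaR n R) (iotaV n v) 0 =
        GamO n (SigmaR n (R' * R)) (iotaV n (v' + R'.mulVec v)) 0) ∧
    (∀ R : Matrix (Fin n) (Fin n) ℝ, Rᵀ * R = 1 → R.det = 1 →
      (SigmaR n R)ᵀ * zetaC n * SigmaR n R = zetaC n) ∧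
    (∀ (R R' : Matrix (Fin n) (Fin n) ℝ) (v v' : Fin n → ℝ),
      Rᵀ * R = 1 → R.det = 1 → R'ᵀ * R' = 1 → R'.det = 1 →
      GamO n (SigmaR n R) (iotaV n v) 0 = GamO n (SigmaR n R') (iotaV n v') 0 →
      v = v' ∧ R = R') := by
  refine ⟨fun R R' v v' _ _ hR' _ => ?_, fun R hR _ => sigmaR_transpose_mul_zetaC_mul_sigmaR n hR,
    fun R R' v v' _ _ _ _ h => ?_⟩
  · rw [gamO_mul_gamO n (sigmaR_transpose_mul_zetaC_mul_sigmaR n hR'), sigmaR_mulVec_iotaV,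
      iotaV_dotProduct_zetaC_mulVec_iotaV, sigmaR_mul, iotaV_add]
    norm_num
  · obtain ⟨hS, hw, -⟩ := (gamO_inj n).mp h
    exact ⟨iotaV_injective n hw, sigmaR_injective n hS⟩

theorem statement15 (n : ℕ) (hn : 1 ≤ n) :
    (∀ (R R' : Matrix (Fin n) (Fin n) ℝ) (v v' : Fin n → ℝ),
      Rᵀ * R = 1 → R.det = 1 → R'ᵀ * R' = 1 → R'.det = 1 →
      GamO n (SigmaR n R') (iotaV n v') 0 * GamO n (SigmaR n R) (iotaV n v) 0 =
        GamO n (SigmaR n (R' * R)) (iotaV n (v' + R'.mulVec v)) 0) ∧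
    (∀ R : Matrix (Fin n) (Fin n) ℝ, Rᵀ * R = 1 → R.det = 1 →
      (SigmaR n R)ᵀ * zetaC n * SigmaR n R = zetaC n) ∧
    (∀ (R R' : Matrix (Fin n) (Fin n) ℝ) (v v' : Fin n → ℝ),
      Rᵀ * R = 1 → R.det = 1 → R'ᵀ * R' = 1 → R'.det = 1 →
      GamO n (SigmaR n R) (iotaV n v) 0 = GamO n (SigmaR n R') (iotaV n v') 0 →
      v = v' ∧ R = R') :=
  statement15_general n

end
end

section
/- Let n ≥ 1. Let H : ℝ^{2n} × ℝ → ℝ and φ : ℝ → ℝ^{2n} be differentiable, and suppose Hamilton's equations hold in the form φ'(t) = ζ°·∇_y H(y, t) for all y ∈ ℝ^{2n} and t ∈ ℝ (where ∇_y H denotes the gradient of H in its first 2n variables). Define ρ : ℝ^{2n} × ℝ × ℝ → ℝ^{2n} × ℝ × ℝ by ρ(y, ε, t) = (y + φ(t), ε + H(y, t), t). Then ρ is differentiable and, at every point z, the total derivative Dρ(z), written as a (2n+2)×(2n+2) matrix M in the coordinates (y, ε, t), satisfies MᵀζM = ζ and MᵀηM = η; that is, ρ preserves the symplectic 2-form determined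 by ζ and the degenerate time metric determined by η. -/
open Matrix

noncomputable section

/-!
At `z = (y, ε, t)` the Jacobian of `ρ` is `M = 1 + u e_tᵀ + e_ε vᵀ` with `u = (φ'(t), 0, 0)` and
`v = ∇H(y, t)`, whose `ε`-entry vanishes. Hamilton's equations say `ζ u + v = (∂ₜH) e_t`, and
`ζ e_ε = -e_t`; together with `ζᵀ = -ζ` this makes `ζ N` symmetric for `N = M - 1`, so that
`Mᵀ ζ M - ζ = Nᵀ ζ N`, which vanishes because `u ⬝ e_t`, `e_ε ⬝ e_t` and `u ⬝ ζ u` do.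
For `η = e_t e_tᵀ` it suffices that `e_tᵀ M = e_tᵀ`.
-/

section SkewConjugation

variable {ι R : Type*} [Fintype ι] [CommRing R]

lemma dotProduct_mulVec_self_eq_zero_of_transpose_eq_neg [NoZeroDivisors R] [CharZero R]
    {J : Matrix ι ι R} (hJ : Jᵀ = -J) (x : ι → R) : x ⬝ᵥ (J *ᵥ x) = 0 := by
  rw [← CharZero.eq_neg_self_iff]
  calc x ⬝ᵥ (J *ᵥ x) = (Jᵀ *ᵥ x) ⬝ᵥ x := by rw [dotProduct_mulVec, mulVec_transpose]
  _ = -(x ⬝ᵥ (J *ᵥ x)) := by rw [hJ, neg_mulVec, neg_dotProduct, dotProduct_comm]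

lemma transpose_mul_vecMulVec_mul (M : Matrix ι ι R) (a b : ι → R) :
    Mᵀ * vecMulVec a b * M = vecMulVec (a ᵥ* M) (b ᵥ* M) := by
  rw [mul_vecMulVec, vecMulVec_mul, mulVec_transpose]

variable [DecidableEq ι]

lemma vecMul_one_add_vecMulVec_add_vecMulVec {u v e f : ι → R} (hfu : f ⬝ᵥ u = 0)
    (hfe : f ⬝ᵥ e = 0) : f ᵥ* (1 + vecMulVec u f + vecMulVec e v) = f := by
  rw [vecMul_add, vecMul_add, vecMul_one, vecMul_vecMulVec, vecMul_vecMulVec, hfu, hfe,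
    zero_smul, zero_smul, add_zero, add_zero]

lemma transpose_mul_mul_one_add_vecMulVec_add_vecMulVec [NoZeroDivisors R] [CharZero R]
    {J : Matrix ι ι R} (hJ : Jᵀ = -J) {u v e f : ι → R} {c : R} (hJe : J *ᵥ e = -f)
    (huf : u ⬝ᵥ f = 0) (hef : e ⬝ᵥ f = 0) (hJuv : J *ᵥ u + v = c • f) :
    (1 + vecMulVec u f + vecMulVec e v)ᵀ * J * (1 + vecMulVec u f + vecMulVec e v) = J := by
  set N := vecMulVec u f + vecMulVec e v
  have hJN : J * N = vecMulVec (J *ᵥ u) f - vecMulVec f v := by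
    rw [Matrix.mul_add, mul_vecMulVec, mul_vecMulVec, hJe, neg_vecMulVec, sub_eq_add_neg]
  -- `J N = c f fᵀ - v fᵀ - f vᵀ` is symmetric, so `Nᵀ J = -(J N)ᵀ = -(J N)`.
  have hNJ : Nᵀ * J = -(J * N) := by
    have hJu : J *ᵥ u = c • f - v := eq_sub_of_add_eq hJuv
    rw [← neg_neg (Nᵀ * J), ← Matrix.mul_neg, ← hJ, ← transpose_mul, hJN, hJu, transpose_sub,
      transpose_vecMulVec, transpose_vecMulVec, sub_vecMulVec, vecMulVec_sub, smul_vecMulVec,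
      vecMulVec_smul]
    abel
  have heJ : e ᵥ* J = f := by rw [← mulVec_transpose, hJ, neg_mulVec, hJe, neg_neg]
  have hNJN : Nᵀ * (J * N) = 0 := by
    rw [hJN, transpose_add, transpose_vecMulVec, transpose_vecMulVec, Matrix.add_mul,
      Matrix.mul_sub, Matrix.mul_sub, vecMulVec_mul_vecMulVec, vecMulVec_mul_vecMulVec,
      vecMulVec_mul_vecMulVec, vecMulVec_mul_vecMulVec,
      dotProduct_mulVec_self_eq_zero_of_transpose_eq_neg hJ, dotProduct_mulVec, heJ,
      dotProduct_comm f u, huf, hef]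
    simp
  have hexp : (1 + N)ᵀ * J * (1 + N) = J + (J * N + Nᵀ * J) + Nᵀ * (J * N) := by
    rw [transpose_add, transpose_one]
    noncomm_ring
  rw [add_assoc, hexp, hNJ, hNJN]
  abel

end SkewConjugation

lemma fderiv_comp_prodMk_left_of_differentiableAt {𝕜 E F G : Type*} [NontriviallyNormedField 𝕜]
    [NormedAddCommGroup E] [NormedSpace 𝕜 E] [NormedAddCommGroup F] [NormedSpace 𝕜 F]
    [NormedAddCommGroup G] [NormedSpace 𝕜 G] {f : E × F → G} {x : E} {y : F}
    (hf : DifferentiableAt 𝕜 f (x, y)) :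
    fderiv 𝕜 (fun x' => f (x', y)) x = (fderiv 𝕜 f (x, y)).comp (ContinuousLinearMap.inl 𝕜 E F) :=
  (hf.hasFDerivAt.comp x (hasFDerivAt_prodMk_left x y)).fderiv

-- `zetaC n` and `zetaBig n` are definitionally `pairedSymplectic ℝ (2*n)` and
-- `pairedSymplectic ℝ (2*n+2)`.
def pairedSymplectic (R : Type*) [Ring R] (m : ℕ) : Matrix (Fin m) (Fin m) R :=
  Matrix.of fun i j =>
    if j.val = i.val + 1 ∧ i.val % 2 = 0 then 1
    else if i.val = j.val + 1 ∧ j.val % 2 = 0 then -1 else 0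

section PairedSymplectic

variable {R : Type*} [Ring R]

lemma pairedSymplectic_transpose (m : ℕ) : (pairedSymplectic R m)ᵀ = -pairedSymplectic R m := by
  ext i j
  simp only [transpose_apply, pairedSymplectic, of_apply, Matrix.neg_apply]
  split_ifs <;> first | (exfalso; omega) | norm_num

lemma pairedSymplectic_mulVec_apply {m : ℕ} (hm : Even m) (x : Fin m → R) (i : Fin m) :
    (pairedSymplectic R m *ᵥ x) i =
      if h : i.val % 2 = 0 then x ⟨i.val + 1, by obtain ⟨k, hk⟩ := hm; omega⟩
      else -x ⟨i.val - 1, by omega⟩ := by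
  obtain ⟨k, rfl⟩ := hm
  split_ifs with h
  · rw [mulVec, dotProduct, Finset.sum_eq_single ⟨i.val + 1, by omega⟩]
    · simp [pairedSymplectic, h]
    · intro j _ hj
      simp only [pairedSymplectic, of_apply]
      rw [if_neg (fun h' => hj (Fin.ext h'.1)), if_neg (by omega), zero_mul]
    · simp
  · rw [mulVec, dotProduct, Finset.sum_eq_single ⟨i.val - 1, by omega⟩]
    · simp only [pairedSymplectic, of_apply]
      rw [if_neg (by omega), if_pos (by omega), neg_one_mul]
    · intro j _ hj
      simp only [pairedSymplectic, of_apply]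
      rw [if_neg (by omega), if_neg (fun h' => hj (Fin.ext (by simp; omega))), zero_mul]
    · simp

end PairedSymplectic

lemma zetaBig_transpose (n : ℕ) : (zetaBig n)ᵀ = -zetaBig n :=
  pairedSymplectic_transpose _

lemma zetaC_mulVec_apply (n : ℕ) (x : Fin (2*n) → ℝ) (i : Fin (2*n)) :
    (zetaC n *ᵥ x) i =
      if h : i.val % 2 = 0 then x ⟨i.val + 1, by omega⟩ else -x ⟨i.val - 1, by omega⟩ :=
  pairedSymplectic_mulVec_apply (even_two_mul n) x i

lemma zetaBig_mulVec_apply (n : ℕ) (x : Fin (2*n+2) → ℝ) (i : Fin (2*n+2)) :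
    (zetaBig n *ᵥ x) i =
      if h : i.val % 2 = 0 then x ⟨i.val + 1, by omega⟩ else -x ⟨i.val - 1, by omega⟩ :=
  pairedSymplectic_mulVec_apply ⟨n + 1, by omega⟩ x i

lemma zetaC_mulVec_mulVec (n : ℕ) (x : Fin (2*n) → ℝ) : zetaC n *ᵥ (zetaC n *ᵥ x) = -x := by
  funext i
  rw [zetaC_mulVec_apply, Pi.neg_apply]
  split_ifs with h
  · rw [zetaC_mulVec_apply, dif_neg (by dsimp only; omega)]
    rfl
  · rw [zetaC_mulVec_apply, dif_pos (by dsimp only; omega)]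
    congr 2
    ext
    dsimp only
    omega

def epsIdx (n : ℕ) : Fin (2*n+2) := ⟨2*n, by omega⟩

def timeIdx (n : ℕ) : Fin (2*n+2) := ⟨2*n+1, by omega⟩

lemma val_lt_or_eq_epsIdx_or_eq_timeIdx {n : ℕ} (i : Fin (2*n+2)) :
    i.val < 2*n ∨ i = epsIdx n ∨ i = timeIdx n := by
  simp only [epsIdx, timeIdx, Fin.ext_iff]
  omega

def zeroExtend (n : ℕ) : (Fin (2*n) → ℝ) →L[ℝ] (Fin (2*n+2) → ℝ) :=
  ContinuousLinearMap.pi fun i =>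
    if h : i.val < 2*n then ContinuousLinearMap.proj ⟨i.val, h⟩ else 0

lemma zeroExtend_apply (n : ℕ) (x : Fin (2*n) → ℝ) (i : Fin (2*n+2)) :
    zeroExtend n x i = if h : i.val < 2*n then x ⟨i.val, h⟩ else 0 := by
  simp only [zeroExtend, ContinuousLinearMap.pi_apply]
  split_ifs <;> rfl

lemma zeroExtend_dotProduct_single_timeIdx (n : ℕ) (x : Fin (2*n) → ℝ) :
    zeroExtend n x ⬝ᵥ Pi.single (timeIdx n) 1 = 0 := by
  simp [zeroExtend_apply, timeIdx]

lemma zetaBig_mulVec_zeroExtend (n : ℕ) (x : Fin (2*n) → ℝ) :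
    zetaBig n *ᵥ zeroExtend n x = zeroExtend n (zetaC n *ᵥ x) := by
  funext i
  simp only [zetaBig_mulVec_apply, zeroExtend_apply, zetaC_mulVec_apply]
  split_ifs <;> first | rfl | omega | simp

lemma zetaBig_mulVec_single_epsIdx (n : ℕ) :
    zetaBig n *ᵥ Pi.single (epsIdx n) 1 = -Pi.single (timeIdx n) 1 := by
  funext i
  rw [zetaBig_mulVec_apply]
  rcases val_lt_or_eq_epsIdx_or_eq_timeIdx i with hi | rfl | rfl
  · have ht : i.val ≠ 2*n+1 := by omega
    split_ifs with h
    · simp [epsIdx, timeIdx, Fin.ext_iff, ht, show i.val + 1 ≠ 2*n by omega]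
    · simp [epsIdx, timeIdx, Fin.ext_iff, ht, show i.val - 1 ≠ 2*n by omega]
  · simp [epsIdx, timeIdx, Fin.ext_iff]
  · simp [epsIdx, timeIdx]

lemma etaM_eq_vecMulVec (n : ℕ) :
    etaM n = vecMulVec (Pi.single (timeIdx n) 1) (Pi.single (timeIdx n) 1) := by
  ext i j
  simp only [etaM, of_apply, vecMulVec_apply, Pi.single_apply, timeIdx, Fin.ext_iff]
  split_ifs <;> simp_all

-- Hamilton's equations in the form `ζ u + v ∈ ℝ e_t`, where `u = (ζ° ∇_y H, 0, 0)` and `v = ∇H`.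
lemma zetaBig_mulVec_zeroExtend_add (n : ℕ) (v : Fin (2*n+2) → ℝ) (hv : v (epsIdx n) = 0) :
    zetaBig n *ᵥ zeroExtend n (zetaC n *ᵥ yPart n v) + v =
      v (timeIdx n) • Pi.single (timeIdx n) 1 := by
  rw [zetaBig_mulVec_zeroExtend, zetaC_mulVec_mulVec]
  funext i
  rcases val_lt_or_eq_epsIdx_or_eq_timeIdx i with hi | rfl | rfl
  · have hne : i ≠ timeIdx n := fun h => by simp [h, timeIdx] at hi
    simp [zeroExtend_apply, hi, hne, yPart]
  · simpa [zeroExtend_apply, epsIdx, timeIdx, Fin.ext_iff] using hv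
  · simp [zeroExtend_apply, timeIdx]

def phaseProj (n : ℕ) : (Fin (2*n+2) → ℝ) →L[ℝ] (Fin (2*n) → ℝ) × ℝ :=
  (ContinuousLinearMap.pi fun a : Fin (2*n) => ContinuousLinearMap.proj ⟨a.val, by omega⟩).prod
    (ContinuousLinearMap.proj (timeIdx n))

lemma phaseProj_apply (n : ℕ) (w : Fin (2*n+2) → ℝ) : phaseProj n w = (yPart n w, tCoord n w) :=
  rfl

lemma phaseProj_single_epsIdx (n : ℕ) : phaseProj n (Pi.single (epsIdx n) 1) = 0 := by
  ext a
  · simp [phaseProj_apply, yPart, epsIdx, Fin.ext_iff, a.isLt.ne]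
  · simp [phaseProj_apply, tCoord, epsIdx]

lemma phaseProj_single_of_lt (n : ℕ) (a : Fin (2*n)) :
    phaseProj n (Pi.single ⟨a.val, by omega⟩ 1) = (Pi.single a 1, 0) := by
  ext b
  · simp [phaseProj_apply, yPart, Pi.single_apply, Fin.ext_iff]
  · simp [phaseProj_apply, tCoord, Fin.ext_iff, show 2*n+1 ≠ a.val by omega]

def extendedGradient (n : ℕ) (H : (Fin (2*n) → ℝ) → ℝ → ℝ) (z : Fin (2*n+2) → ℝ) :
    Fin (2*n+2) → ℝ :=
  fun j => fderiv ℝ (fun w => H (yPart n w) (tCoord n w)) z (Pi.single j 1)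

section Hamiltonian

variable {n : ℕ} {H : (Fin (2*n) → ℝ) → ℝ → ℝ}

lemma hasFDerivAt_comp_phaseProj (hH : Differentiable ℝ (fun p : (Fin (2*n) → ℝ) × ℝ => H p.1 p.2))
    (z : Fin (2*n+2) → ℝ) :
    HasFDerivAt (fun w => H (yPart n w) (tCoord n w))
      ((fderiv ℝ (fun p : (Fin (2*n) → ℝ) × ℝ => H p.1 p.2) (phaseProj n z)).comp (phaseProj n)) z :=
  (hH _).hasFDerivAt.comp z (phaseProj n).hasFDerivAt

lemma extendedGradient_epsIdx (hH : Differentiable ℝ (fun p : (Fin (2*n) → ℝ) × ℝ => H p.1 p.2))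
    (z : Fin (2*n+2) → ℝ) : extendedGradient n H z (epsIdx n) = 0 := by
  rw [extendedGradient, (hasFDerivAt_comp_phaseProj hH z).fderiv, ContinuousLinearMap.comp_apply,
    phaseProj_single_epsIdx, map_zero]

lemma yPart_extendedGradient (hH : Differentiable ℝ (fun p : (Fin (2*n) → ℝ) × ℝ => H p.1 p.2))
    (z : Fin (2*n+2) → ℝ) :
    yPart n (extendedGradient n H z) =
      fun b => fderiv ℝ (fun y' => H y' (tCoord n z)) (yPart n z) (Pi.single b 1) := by
  funext b
  rw [fderiv_comp_prodMk_left_of_differentiableAt (f := fun p => H p.1 p.2) (hH _), yPart, extendedGradient, (hasFDerivAt_comp_phaseProj hH z).fderiv,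
    ContinuousLinearMap.comp_apply, phaseProj_single_of_lt]
  rfl

end Hamiltonian

section RhoMap

variable {n : ℕ} {φ : ℝ → Fin (2*n) → ℝ} {H : (Fin (2*n) → ℝ) → ℝ → ℝ}

lemma rhoMap_eq (c : ℝ) :
    rhoMap n φ H c = fun w => w + zeroExtend n (φ (tCoord n w)) +
      H (yPart n w) (tCoord n w) • Pi.single (epsIdx n) 1 + c • Pi.single (timeIdx n) 1 := by
  funext w i
  rcases val_lt_or_eq_epsIdx_or_eq_timeIdx i with hi | rfl | rfl
  · have hε : i ≠ epsIdx n := fun h => by simp [h, epsIdx] at hi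
    have ht : i ≠ timeIdx n := fun h => by simp [h, timeIdx] at hi
    simp [rhoMap, zeroExtend_apply, hi, hε, ht]
  · simp [rhoMap, zeroExtend_apply, epsIdx, timeIdx, Fin.ext_iff]
  · simp [rhoMap, zeroExtend_apply, epsIdx, timeIdx, Fin.ext_iff]

lemma hasFDerivAt_rhoMap (hH : Differentiable ℝ (fun p : (Fin (2*n) → ℝ) × ℝ => H p.1 p.2))
    (hφ : Differentiable ℝ φ) (c : ℝ) (z : Fin (2*n+2) → ℝ) :
    HasFDerivAt (rhoMap n φ H c)
      (ContinuousLinearMap.id ℝ _ +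
        (ContinuousLinearMap.proj (timeIdx n)).smulRight (zeroExtend n (deriv φ (tCoord n z))) +
        (fderiv ℝ (fun w => H (yPart n w) (tCoord n w)) z).smulRight (Pi.single (epsIdx n) 1)) z := by
  rw [rhoMap_eq]
  refine (((hasFDerivAt_id z).add ?_).add ?_).add_const _
  · have hΦ : HasDerivAt (fun s => zeroExtend n (φ s)) (zeroExtend n (deriv φ (tCoord n z)))
        (tCoord n z) :=
      (zeroExtend n).hasFDerivAt.comp_hasDerivAt _ (hφ _).hasDerivAt
    have ht : HasFDerivAt (tCoord n)
        (ContinuousLinearMap.proj (R := ℝ) (φ := fun _ : Fin (2*n+2) => ℝ) (timeIdx n)) z :=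
      hasFDerivAt_apply _ _
    refine (hΦ.hasFDerivAt.comp z ht).congr_fderiv ?_
    ext w : 1
    simp
  · exact (hasFDerivAt_comp_phaseProj hH z).differentiableAt.hasFDerivAt.smul_const _

lemma jacM_rhoMap (hH : Differentiable ℝ (fun p : (Fin (2*n) → ℝ) × ℝ => H p.1 p.2))
    (hφ : Differentiable ℝ φ) (c : ℝ) (z : Fin (2*n+2) → ℝ) :
    jacM (2*n+2) (rhoMap n φ H c) z =
      1 + vecMulVec (zeroExtend n (deriv φ (tCoord n z))) (Pi.single (timeIdx n) 1) +
        vecMulVec (Pi.single (epsIdx n) 1) (extendedGradient n H z) := by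
  have hρ' := (hasFDerivAt_rhoMap hH hφ c z).fderiv
  ext i j
  rcases eq_or_ne j (timeIdx n) with rfl | hj
  · simp [jacM, hρ', extendedGradient, vecMulVec_apply, Matrix.one_apply, Pi.single_apply, mul_comm]
  · simp [jacM, hρ', extendedGradient, vecMulVec_apply, Matrix.one_apply, Pi.single_apply, hj,
      hj.symm]

end RhoMap

theorem statement17_general (n : ℕ)
    (H : (Fin (2*n) → ℝ) → ℝ → ℝ) (φ : ℝ → Fin (2*n) → ℝ)
    (hH : Differentiable ℝ (fun p : (Fin (2*n) → ℝ) × ℝ => H p.1 p.2))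
    (hφ : Differentiable ℝ φ)
    (ham : ∀ (y : Fin (2*n) → ℝ) (t : ℝ) (a : Fin (2*n)),
      deriv (fun s => φ s a) t =
        ∑ b, zetaC n a b * fderiv ℝ (fun y' => H y' t) y (Pi.single b 1)) :
    Differentiable ℝ (rhoMap n φ H 0) ∧
    ∀ z : Fin (2*n+2) → ℝ,
      (jacM (2*n+2) (rhoMap n φ H 0) z)ᵀ * zetaBig n * jacM (2*n+2) (rhoMap n φ H 0) z =
        zetaBig n ∧
      (jacM (2*n+2) (rhoMap n φ H 0) z)ᵀ * etaM n * jacM (2*n+2) (rhoMap n φ H 0) z =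
        etaM n := by
  refine ⟨fun z => (hasFDerivAt_rhoMap hH hφ 0 z).differentiableAt, fun z => ?_⟩
  have hφ' : deriv φ (tCoord n z) = zetaC n *ᵥ yPart n (extendedGradient n H z) := by
    funext a
    rw [deriv_pi fun i => differentiableAt_pi.1 (hφ _) i]
    beta_reduce
    rw [ham (yPart n z), yPart_extendedGradient hH]
    rfl
  have hut := zeroExtend_dotProduct_single_timeIdx n (zetaC n *ᵥ yPart n (extendedGradient n H z))
  have het : Pi.single (epsIdx n) 1 ⬝ᵥ Pi.single (timeIdx n) (1 : ℝ) = 0 := by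
    simp [epsIdx, timeIdx]
  rw [jacM_rhoMap hH hφ 0 z, hφ']
  refine ⟨transpose_mul_mul_one_add_vecMulVec_add_vecMulVec (zetaBig_transpose n)
    (zetaBig_mulVec_single_epsIdx n) hut het
    (zetaBig_mulVec_zeroExtend_add n _ (extendedGradient_epsIdx hH z)), ?_⟩
  rw [etaM_eq_vecMulVec, transpose_mul_vecMulVec_mul,
    vecMul_one_add_vecMulVec_add_vecMulVec (by rwa [dotProduct_comm]) (by rwa [dotProduct_comm])]

theorem statement17 (n : ℕ) (hn : 1 ≤ n)
    (H : (Fin (2*n) → ℝ) → ℝ → ℝ) (φ : ℝ → Fin (2*n) → ℝ)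
    (hH : Differentiable ℝ (fun p : (Fin (2*n) → ℝ) × ℝ => H p.1 p.2))
    (hφ : Differentiable ℝ φ)
    (ham : ∀ (y : Fin (2*n) → ℝ) (t : ℝ) (a : Fin (2*n)),
      deriv (fun s => φ s a) t =
        ∑ b, zetaC n a b * fderiv ℝ (fun y' => H y' t) y (Pi.single b 1)) :
    Differentiable ℝ (rhoMap n φ H 0) ∧
    ∀ z : Fin (2*n+2) → ℝ,
      (jacM (2*n+2) (rhoMap n φ H 0) z)ᵀ * zetaBig n * jacM (2*n+2) (rhoMap n φ H 0) z =
        zetaBig n ∧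
      (jacM (2*n+2) (rhoMap n φ H 0) z)ᵀ * etaM n * jacM (2*n+2) (rhoMap n φ H 0) z =
        etaM n :=
  statement17_general n H φ hH hφ ham

end
end

section
/- Let n ≥ 1 and let ρ : ℝ^{2n} × ℝ × ℝ → ℝ^{2n} × ℝ × ℝ be a continuously differentiable map such that at every point z = (y, ε, t) its Jacobian matrix in the coordinates (y, ε, t) equals Υ(w, r) for some w ∈ ℝ^{2n} and r ∈ ℝ (depending on z). Then there exist a constant c ∈ ℝ, a differentiable curve φ : ℝ → ℝ^{2n} and a differentiable function H : ℝ^{2n} × ℝ → ℝ such that ρ(y, ε, t) = (y + φ(t), ε + H(y, t), t + c) for all (y, ε, t), and Hamilton's equations φ'(t) = ζ°·∇_y H(y, t) hold for all y ∈ ℝ^{2n} and t ∈ ℝ (where ∇_y H denotes the gradient of H in its first 2n variables). -/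
open Matrix

noncomputable section

/-! The displacement `ρ z - z` has Jacobian `Υ(w, r) - 1`, whose only nonzero entries are
`∂ₜ` of the `y`-components (the vector `w`) and the `y`- and `t`-derivatives of the
`ε`-component (the covector `wᵀζ°` and `2r`). So the `y`-part of the displacement depends only
on `t`, its `ε`-part only on `(y, t)`, and its `t`-part is constant: this is the normal form,
with `φ` and `H` read off on the slice `ε = 0`. Since `ζ°` is orthogonal, the two occurrences
of `w` give `φ'(t) = w = ζ° (wᵀζ°)ᵀ = ζ° ∇_y H`. -/

@[simp] theorem Fin.castAdd_ne_natAdd {m k : ℕ} (i : Fin m) (j : Fin k) :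
    Fin.castAdd k i ≠ Fin.natAdd m j := by
  simp [Fin.ext_iff]
  omega

theorem Fin.append_update_left {α : Type*} {m k : ℕ} (u : Fin m → α) (v : Fin k → α)
    (i : Fin m) (x : α) :
    Fin.append (Function.update u i x) v =
      Function.update (Fin.append u v) (Fin.castAdd k i) x := by
  ext j
  cases j using Fin.addCases with
  | left a => simp [Function.update_apply]
  | right b => simp [Function.update_of_ne (Fin.castAdd_ne_natAdd i b).symm]

theorem Differentiable.finAppend {E F : Type*} [NormedAddCommGroup E] [NormedSpace ℝ E]
    [NormedAddCommGroup F] [NormedSpace ℝ F] {m k : ℕ} {f : E → Fin m → F}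
    {g : E → Fin k → F} (hf : Differentiable ℝ f) (hg : Differentiable ℝ g) :
    Differentiable ℝ (fun x => Fin.append (f x) (g x)) :=
  differentiable_pi.2 fun i => Fin.addCases (fun a => by simpa using differentiable_pi.1 hf a)
    (fun b => by simpa using differentiable_pi.1 hg b) i

theorem differentiable_vecCons_zero : Differentiable ℝ (fun t : ℝ => ![0, t]) :=
  differentiable_pi.2 fun k => by fin_cases k <;> simp

theorem apply_add_eq_of_fderiv_apply_eq_zero {E F : Type*} [NormedAddCommGroup E]
    [NormedSpace ℝ E] [NormedAddCommGroup F] [NormedSpace ℝ F] {g : E → F}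
    (hg : Differentiable ℝ g) {v : E} (hv : ∀ x, fderiv ℝ g x v = 0) (x : E) :
    g (x + v) = g x := by
  have hderiv (t : ℝ) : HasDerivAt (fun t : ℝ => g (x + t • v)) 0 t := by
    have h := (hg (x + t • v)).hasFDerivAt.comp_hasDerivAt t
      (((hasDerivAt_id' t).smul_const v).const_add x)
    rwa [one_smul, hv] at h
  simpa using is_const_of_deriv_eq_zero (fun t => (hderiv t).differentiableAt)
    (fun t => (hderiv t).deriv) 1 0

theorem apply_eq_of_fderiv_single_eq_zero {ι F : Type*} [Fintype ι] [DecidableEq ι]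
    [NormedAddCommGroup F] [NormedSpace ℝ F] {g : (ι → ℝ) → F} (hg : Differentiable ℝ g)
    {s : Set ι} (hs : ∀ z, ∀ j ∈ s, fderiv ℝ g z (Pi.single j 1) = 0) {x y : ι → ℝ}
    (hxy : ∀ i ∉ s, x i = y i) : g x = g y := by
  have hv (z : ι → ℝ) : fderiv ℝ g z (y - x) = 0 := by
    rw [← Finset.univ_sum_single (y - x), map_sum]
    refine Finset.sum_eq_zero fun j _ => ?_
    rw [← mul_one ((y - x) j), ← smul_eq_mul, Pi.single_smul', map_smul]
    by_cases hj : j ∈ s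
    · rw [hs z j hj, smul_zero]
    · rw [Pi.sub_apply, hxy j hj, sub_self, zero_smul]
  rw [← add_sub_cancel x y]
  exact (apply_add_eq_of_fderiv_apply_eq_zero hg hv x).symm

theorem fderiv_single_eq_deriv_update {ι F : Type*} [Fintype ι] [DecidableEq ι]
    [NormedAddCommGroup F] [NormedSpace ℝ F] {f : (ι → ℝ) → F} {x : ι → ℝ}
    (hf : DifferentiableAt ℝ f x) (i : ι) :
    fderiv ℝ f x (Pi.single i 1) = deriv (fun s => f (Function.update x i s)) (x i) := by
  have h : HasFDerivAt f (fderiv ℝ f x) (Function.update x i (x i)) := by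
    rw [Function.update_eq_self]
    exact hf.hasFDerivAt
  exact (h.comp_hasDerivAt (x i) (hasDerivAt_update x i (x i))).deriv.symm

section Jacobian
variable {N : ℕ} {ρ : (Fin N → ℝ) → Fin N → ℝ}

theorem fderiv_apply_single_eq_jacM {z : Fin N → ℝ} (hρ : DifferentiableAt ℝ ρ z)
    (i j : Fin N) : fderiv ℝ (fun x => ρ x i) z (Pi.single j 1) = jacM N ρ z i j := by
  simp [fderiv_apply hρ, jacM]

theorem fderiv_apply_sub_apply_single_eq {z : Fin N → ℝ} (hρ : DifferentiableAt ℝ ρ z)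
    (i j : Fin N) :
    fderiv ℝ (fun x => ρ x i - x i) z (Pi.single j 1) =
      jacM N ρ z i j - (1 : Matrix (Fin N) (Fin N) ℝ) i j := by
  rw [fderiv_fun_sub (differentiableAt_pi.1 hρ i) (differentiableAt_apply i z),
    _root_.sub_apply, fderiv_apply_single_eq_jacM hρ, (hasFDerivAt_apply i z).fderiv]
  simp [one_apply, Pi.single_apply]

theorem apply_sub_eq_of_jacM_eq_one (hρ : Differentiable ℝ ρ) {i : Fin N} {s : Set (Fin N)}
    (hs : ∀ z, ∀ j ∈ s, jacM N ρ z i j = (1 : Matrix (Fin N) (Fin N) ℝ) i j)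
    {x y : Fin N → ℝ} (hxy : ∀ j ∉ s, x j = y j) : ρ x i - x i = ρ y i - y i :=
  apply_eq_of_fderiv_single_eq_zero (g := fun z => ρ z i - z i)
    ((differentiable_pi.1 hρ i).sub (differentiable_apply i))
    (fun z j hj => by rw [fderiv_apply_sub_apply_single_eq (hρ z), hs z j hj, sub_self]) hxy

end Jacobian

theorem zetaC_mul_transpose (n : ℕ) : zetaC n * (zetaC n)ᵀ = 1 := by
  ext a c
  have ha := a.isLt
  -- row `a` of `ζ°` has a single nonzero entry, `±1`, in the column of the partner of `a`
  rw [mul_apply, Finset.sum_eq_single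
    ⟨if a.val % 2 = 0 then a.val + 1 else a.val - 1, by split_ifs <;> omega⟩]
  · simp only [transpose_apply, zetaC, of_apply, one_apply, Fin.ext_iff]
    split_ifs <;> first | omega | norm_num
  · intro b _ hb
    have hb' : b.val ≠ if a.val % 2 = 0 then a.val + 1 else a.val - 1 :=
      fun h => hb (Fin.ext h)
    have hab : zetaC n a b = 0 := by
      simp only [zetaC, of_apply]
      split_ifs at hb' ⊢ <;> first | rfl | omega
    rw [hab, zero_mul]
  · simp

theorem zetaC_mulVec_vecMul (n : ℕ) (w : Fin (2*n) → ℝ) :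
    zetaC n *ᵥ vecMul w (zetaC n) = w := by
  rw [← mulVec_transpose, mulVec_mulVec, zetaC_mul_transpose, one_mulVec]

section Ups
variable {n : ℕ} (w : Fin (2*n) → ℝ) (r : ℝ) (a b : Fin (2*n))

@[simp] theorem Ups_castAdd_castAdd :
    Ups n w r (Fin.castAdd 2 a) (Fin.castAdd 2 b) = (1 : Matrix _ _ ℝ) a b := by
  simp [Ups, GamO]
  rfl

@[simp] theorem Ups_castAdd_natAdd_zero :
    Ups n w r (Fin.castAdd 2 a) (Fin.natAdd (2*n) 0) = 0 := by
  simp [Ups, GamO]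

@[simp] theorem Ups_castAdd_natAdd_one :
    Ups n w r (Fin.castAdd 2 a) (Fin.natAdd (2*n) 1) = w a := by
  simp [Ups, GamO]

@[simp] theorem Ups_natAdd_zero_castAdd :
    Ups n w r (Fin.natAdd (2*n) 0) (Fin.castAdd 2 b) = vecMul w (zetaC n) b := by
  simp [Ups, GamO]

@[simp] theorem Ups_natAdd_zero_natAdd_zero :
    Ups n w r (Fin.natAdd (2*n) 0) (Fin.natAdd (2*n) 0) = 1 := by
  simp [Ups, GamO]

theorem Ups_natAdd_one (j : Fin (2*n+2)) :
    Ups n w r (Fin.natAdd (2*n) 1) j =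
      (1 : Matrix (Fin (2*n+2)) (Fin (2*n+2)) ℝ) (Fin.natAdd (2*n) 1) j := by
  simp [Ups, GamO, one_apply, Fin.ext_iff, eq_comm]

end Ups

@[simp] theorem yPart_apply {n : ℕ} (z : Fin (2*n+2) → ℝ) (a : Fin (2*n)) :
    yPart n z a = z (Fin.castAdd 2 a) := rfl

@[simp] theorem tCoord_eq {n : ℕ} (z : Fin (2*n+2) → ℝ) :
    tCoord n z = z (Fin.natAdd (2*n) 1) := rfl

section NormalForm
variable {n : ℕ} (ρ : (Fin (2*n+2) → ℝ) → Fin (2*n+2) → ℝ)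

def HasUpsJacobian : Prop :=
  ∀ z, ∃ (w : Fin (2*n) → ℝ) (r : ℝ), jacM (2*n+2) ρ z = Ups n w r

def translationCurve (t : ℝ) (a : Fin (2*n)) : ℝ :=
  ρ (Fin.append 0 ![0, t]) (Fin.castAdd 2 a)

def hamiltonian (y : Fin (2*n) → ℝ) (t : ℝ) : ℝ :=
  ρ (Fin.append y ![0, t]) (Fin.natAdd (2*n) 0)

variable {ρ}

theorem differentiable_translationCurve (hρ : Differentiable ℝ ρ) :
    Differentiable ℝ (translationCurve ρ) :=
  differentiable_pi.2 fun _ => (differentiable_pi.1 hρ _).comp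
    ((differentiable_const _).finAppend differentiable_vecCons_zero)

theorem differentiable_hamiltonian (hρ : Differentiable ℝ ρ) :
    Differentiable ℝ (fun p : (Fin (2*n) → ℝ) × ℝ => hamiltonian ρ p.1 p.2) :=
  (differentiable_pi.1 hρ _).comp
    (differentiable_fst.finAppend (differentiable_vecCons_zero.comp differentiable_snd))

theorem apply_castAdd_eq (hρ : Differentiable ℝ ρ) (hjac : HasUpsJacobian ρ)
    (z : Fin (2*n+2) → ℝ) (a : Fin (2*n)) :
    ρ z (Fin.castAdd 2 a) = z (Fin.castAdd 2 a) + translationCurve ρ (tCoord n z) a := by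
  have h := apply_sub_eq_of_jacM_eq_one hρ (i := Fin.castAdd 2 a)
    (s := {Fin.natAdd (2*n) 1}ᶜ) (x := z) (y := Fin.append 0 ![0, tCoord n z]) ?_ ?_
  · simp only [Fin.append_left, Pi.zero_apply, sub_zero] at h
    rw [translationCurve, ← h]
    ring
  · intro x j hj
    obtain ⟨w, r, hw⟩ := hjac x
    rw [hw]
    cases j using Fin.addCases with
    | left b => simp [one_apply]
    | right k => fin_cases k <;> simp_all [one_apply]
  · intro j hj
    rw [Set.notMem_compl_iff, Set.mem_singleton_iff] at hj
    simp [hj]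

theorem apply_natAdd_zero_eq (hρ : Differentiable ℝ ρ) (hjac : HasUpsJacobian ρ)
    (z : Fin (2*n+2) → ℝ) :
    ρ z (Fin.natAdd (2*n) 0) =
      z (Fin.natAdd (2*n) 0) + hamiltonian ρ (yPart n z) (tCoord n z) := by
  have h := apply_sub_eq_of_jacM_eq_one hρ (i := Fin.natAdd (2*n) 0)
    (s := {Fin.natAdd (2*n) 0}) (x := z) (y := Fin.append (yPart n z) ![0, tCoord n z]) ?_ ?_
  · simp only [Fin.append_right, cons_val_zero, sub_zero] at h
    rw [hamiltonian, ← h]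
    ring
  · intro x j hj
    obtain ⟨w, r, hw⟩ := hjac x
    rw [Set.mem_singleton_iff] at hj
    subst hj
    simp [hw]
  · intro j hj
    cases j using Fin.addCases with
    | left b => simp
    | right k => fin_cases k <;> simp_all

theorem apply_natAdd_one_eq (hρ : Differentiable ℝ ρ) (hjac : HasUpsJacobian ρ)
    (z : Fin (2*n+2) → ℝ) :
    ρ z (Fin.natAdd (2*n) 1) = z (Fin.natAdd (2*n) 1) + ρ 0 (Fin.natAdd (2*n) 1) := by
  have h := apply_sub_eq_of_jacM_eq_one hρ (i := Fin.natAdd (2*n) 1) (s := Set.univ)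
    (x := z) (y := 0) ?_ ?_
  · rw [Pi.zero_apply, sub_zero] at h
    rw [← h]
    ring
  · intro x j _
    obtain ⟨w, r, hw⟩ := hjac x
    rw [hw, Ups_natAdd_one]
  · simp

theorem eq_rhoMap (hρ : Differentiable ℝ ρ) (hjac : HasUpsJacobian ρ) :
    ρ = rhoMap n (translationCurve ρ) (hamiltonian ρ) (ρ 0 (Fin.natAdd (2*n) 1)) := by
  ext z i
  cases i using Fin.addCases with
  | left a => simp [rhoMap, apply_castAdd_eq hρ hjac]
  | right k =>
    fin_cases k
    · simp [rhoMap, apply_natAdd_zero_eq hρ hjac]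
    · simpa [rhoMap] using apply_natAdd_one_eq hρ hjac z

theorem deriv_translationCurve (hρ : Differentiable ℝ ρ) (hjac : HasUpsJacobian ρ)
    {z : Fin (2*n+2) → ℝ} {w : Fin (2*n) → ℝ} {r : ℝ}
    (hz : jacM (2*n+2) ρ z = Ups n w r) (a : Fin (2*n)) :
    deriv (fun s => translationCurve ρ s a) (tCoord n z) = w a := by
  have h := fderiv_single_eq_deriv_update (differentiableAt_pi.1 (hρ z) (Fin.castAdd 2 a))
    (Fin.natAdd (2*n) 1)
  rw [fderiv_apply_single_eq_jacM (hρ z), hz, Ups_castAdd_natAdd_one] at h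
  have hline : (fun s => ρ (Function.update z (Fin.natAdd (2*n) 1) s) (Fin.castAdd 2 a)) =
      fun s => z (Fin.castAdd 2 a) + translationCurve ρ s a := by
    ext s
    simp [apply_castAdd_eq hρ hjac]
  rw [hline, deriv_const_add] at h
  exact h.symm

theorem fderiv_hamiltonian_single (hρ : Differentiable ℝ ρ)
    {y : Fin (2*n) → ℝ} {t : ℝ} {w : Fin (2*n) → ℝ} {r : ℝ}
    (hz : jacM (2*n+2) ρ (Fin.append y ![0, t]) = Ups n w r) (b : Fin (2*n)) :
    fderiv ℝ (fun y' => hamiltonian ρ y' t) y (Pi.single b 1) = vecMul w (zetaC n) b := by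
  have h := fderiv_single_eq_deriv_update
    (differentiableAt_pi.1 (hρ (Fin.append y ![0, t])) (Fin.natAdd (2*n) 0)) (Fin.castAdd 2 b)
  rw [fderiv_apply_single_eq_jacM (hρ _), hz, Ups_natAdd_zero_castAdd, Fin.append_left] at h
  rw [h, fderiv_single_eq_deriv_update]
  · simp [hamiltonian, Fin.append_update_left]
  · exact ((differentiable_hamiltonian hρ).comp
      (differentiable_id.prodMk (differentiable_const t))).differentiableAt

end NormalForm

theorem statement18_general (n : ℕ)
    (ρ : (Fin (2*n+2) → ℝ) → (Fin (2*n+2) → ℝ))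
    (hρ : ContDiff ℝ 1 ρ)
    (hjac : ∀ z : Fin (2*n+2) → ℝ,
      ∃ (w : Fin (2*n) → ℝ) (r : ℝ), jacM (2*n+2) ρ z = Ups n w r) :
    ∃ (c : ℝ) (φ : ℝ → Fin (2*n) → ℝ) (H : (Fin (2*n) → ℝ) → ℝ → ℝ),
      Differentiable ℝ φ ∧
      Differentiable ℝ (fun p : (Fin (2*n) → ℝ) × ℝ => H p.1 p.2) ∧
      (∀ z : Fin (2*n+2) → ℝ, ρ z = rhoMap n φ H c z) ∧
      (∀ (y : Fin (2*n) → ℝ) (t : ℝ) (a : Fin (2*n)),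
        deriv (fun s => φ s a) t =
          ∑ b, zetaC n a b * fderiv ℝ (fun y' => H y' t) y (Pi.single b 1)) := by
  have hρ' : Differentiable ℝ ρ := hρ.differentiable one_ne_zero
  refine ⟨ρ 0 (Fin.natAdd (2*n) 1), translationCurve ρ, hamiltonian ρ,
    differentiable_translationCurve hρ', differentiable_hamiltonian hρ',
    fun z => congrFun (eq_rhoMap hρ' hjac) z, fun y t a => ?_⟩
  obtain ⟨w, r, hw⟩ := hjac (Fin.append y ![0, t])
  have hφ := deriv_translationCurve hρ' hjac hw a
  simp only [tCoord_eq, Fin.append_right, cons_val_one, cons_val_zero] at hφ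
  simp only [hφ, fderiv_hamiltonian_single hρ' hw]
  exact (congrFun (zetaC_mulVec_vecMul n w) a).symm

theorem statement18 (n : ℕ) (hn : 1 ≤ n)
    (ρ : (Fin (2*n+2) → ℝ) → (Fin (2*n+2) → ℝ))
    (hρ : ContDiff ℝ 1 ρ)
    (hjac : ∀ z : Fin (2*n+2) → ℝ,
      ∃ (w : Fin (2*n) → ℝ) (r : ℝ), jacM (2*n+2) ρ z = Ups n w r) :
    ∃ (c : ℝ) (φ : ℝ → Fin (2*n) → ℝ) (H : (Fin (2*n) → ℝ) → ℝ → ℝ),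
      Differentiable ℝ φ ∧
      Differentiable ℝ (fun p : (Fin (2*n) → ℝ) × ℝ => H p.1 p.2) ∧
      (∀ z : Fin (2*n+2) → ℝ, ρ z = rhoMap n φ H c z) ∧
      (∀ (y : Fin (2*n) → ℝ) (t : ℝ) (a : Fin (2*n)),
        deriv (fun s => φ s a) t =
          ∑ b, zetaC n a b * fderiv ℝ (fun y' => H y' t) y (Pi.single b 1)) :=
  statement18_general n ρ hρ hjac

end
end
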